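/- arXiv:1512.09321 — 6 statements merged into one kernel-verified Lean document; each statement's English description precedes it below -/
import Mathlib

section
/- Let w ≤ -1 be an integer, let S be a combinatorial w-Hom configuration, and let s ∈ S be an arc that has an overarc in S. Then there are exactly |w| d-admissible arcs a such that (S \ {s}) ∪ {a} is a combinatorial w-Hom configuration (one of these |w| arcs being s itself); equivalently, s has exactly |w| - 1 replacements. -/
open Set

/-!
Let `b` be a minimal overarc of `s` in `S` and let `P` be the set of inner-isolated vertices
of `b` once `s` is removed. Then `P` is the disjoint union of the `|w| - 1` inner-isolated
vertices of `s`, the `|w| - 1` of `b`, and the two endpoints of `s`, so `|P| = 2|w|`.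
An arc `a` can take the place of `s` exactly when it joins two points of `P` with `|w| - 1`
points of `P` strictly between them: then `a` and `b` each keep `|w| - 1` inner-isolated
vertices, no other arc and no outer-isolated vertex notices the exchange, and `a` is
admissible because the closed span of every arc of a Hom configuration has a multiple of
`1 - w` vertices (its inner-isolated vertices, its endpoints, and the closed spans of its
maximal nested arcs, which are multiples by induction). Listing `P` increasingly as
`p₀ < ⋯ < p_{2|w|-1}`, these arcs are the `|w|` arcs `(p_{i+|w|}, p_i)`.
-/

/-- An arc of the `∞`-gon: a pair of integers `(t, u)`, source `t`, target `u`. -/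
abbrev Arc := ℤ × ℤ

/-- `(t,u)` is `d`-admissible for `d = w - 1`: `u - t ≤ w` and `u - t ≡ 1 (mod d)`. -/
def IsAdmissible (w : ℤ) (a : Arc) : Prop :=
  a.2 - a.1 ≤ w ∧ (w - 1) ∣ (a.2 - a.1 - 1)

/-- `p` is an endpoint of the arc `a`. -/
def IsEndpoint (p : ℤ) (a : Arc) : Prop := p = a.1 ∨ p = a.2

/-- `b = (v,x)` is an overarc of `a = (t,u)` if `x < u < t < v`. -/
def OverarcOf (b a : Arc) : Prop := b.2 < a.2 ∧ a.2 < a.1 ∧ a.1 < b.1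

/-- `b = (v,x)` is an overarc of the integer `p` if `x < p < v`. -/
def OverarcOfVertex (b : Arc) (p : ℤ) : Prop := b.2 < p ∧ p < b.1

/-- Arcs `a` and `b` share an endpoint. -/
def SharesEndpoint (a b : Arc) : Prop :=
  a.1 = b.1 ∨ a.1 = b.2 ∨ a.2 = b.1 ∨ a.2 = b.2

/-- Arcs `a = (t,u)` and `b = (v,x)` strictly cross: `u < x < t < v` or `x < u < v < t`. -/
def StrictCross (a b : Arc) : Prop :=
  (a.2 < b.2 ∧ b.2 < a.1 ∧ a.1 < b.1) ∨ (b.2 < a.2 ∧ a.2 < b.1 ∧ b.1 < a.1)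

/-- Two arcs cross if they share an endpoint or strictly cross. -/
def Cross (a b : Arc) : Prop := SharesEndpoint a b ∨ StrictCross a b

/-- `p` is isolated with respect to `X` if it is an endpoint of no arc of `X`. -/
def Isolated (X : Set Arc) (p : ℤ) : Prop := ∀ a ∈ X, ¬ IsEndpoint p a

/-- `p` is an inner-isolated vertex of the arc `b` with respect to `X`: `p` is isolated,
`b` is an overarc of `p`, and no arc of `X` of which `b` is an overarc is an overarc of `p`. -/
def InnerIsolatedOf (X : Set Arc) (b : Arc) (p : ℤ) : Prop :=
  Isolated X p ∧ OverarcOfVertex b p ∧ ∀ c ∈ X, OverarcOf b c → ¬ OverarcOfVertex c p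

/-- `p` is an outer-isolated vertex of `X`: isolated with no overarc in `X`. -/
def OuterIsolated (X : Set Arc) (p : ℤ) : Prop :=
  Isolated X p ∧ ∀ b ∈ X, ¬ OverarcOfVertex b p

/-- A combinatorial `w`-Hom configuration: a set of `d`-admissible arcs (`d = w - 1`),
pairwise noncrossing, such that every arc has exactly `|w| - 1` inner-isolated vertices
and there are at most `|w|` outer-isolated vertices. -/
def IsHomConfig (w : ℤ) (S : Set Arc) : Prop :=
  (∀ a ∈ S, IsAdmissible w a) ∧
  (∀ a ∈ S, ∀ b ∈ S, a ≠ b → ¬ Cross a b) ∧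
  (∀ a ∈ S, {p : ℤ | InnerIsolatedOf S a p}.encard = ((-w - 1).toNat : ℕ∞)) ∧
  {p : ℤ | OuterIsolated S p}.encard ≤ ((-w).toNat : ℕ∞)

/-- A combinatorial `w`-Riedtmann configuration: a `w`-Hom configuration with at most
`|w| - 1` outer-isolated vertices. -/
def IsRiedtmann (w : ℤ) (S : Set Arc) : Prop :=
  IsHomConfig w S ∧ {p : ℤ | OuterIsolated S p}.encard ≤ ((-w - 1).toNat : ℕ∞)

/-- A combinatorial `w`-simple-minded system: a `w`-Riedtmann configuration in which
every arc has an overarc. -/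
def IsSMS (w : ℤ) (S : Set Arc) : Prop :=
  IsRiedtmann w S ∧ ∀ a ∈ S, ∃ b ∈ S, OverarcOf b a

/-- `t` is a replacement of `s` in the `w`-Hom configuration `S`. -/
def IsReplacement (w : ℤ) (S : Set Arc) (s t : Arc) : Prop :=
  t ≠ s ∧ IsHomConfig w ((S \ {s}) ∪ {t})

/-- `c` is a Ptolemy arc of class I associated to the strictly crossing arcs `a` and `b`:
one of the four arcs joining an endpoint of `a` to an endpoint of `b`. -/
def IsPtolemyI (a b c : Arc) : Prop :=
  StrictCross a b ∧ c.2 < c.1 ∧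
    ((IsEndpoint c.1 a ∧ IsEndpoint c.2 b) ∨ (IsEndpoint c.1 b ∧ IsEndpoint c.2 a))

/-- `c` is a Ptolemy arc of class II associated to the neighbouring arcs `a` and `b`:
the distance `1` is realised by endpoints `p` and `p - 1`, and `c` joins the endpoint of
`a` other than `p, p-1` to the endpoint of `b` other than `p, p-1`. -/
def IsPtolemyII (a b c : Arc) : Prop :=
  ¬ Cross a b ∧
  ∃ p e f : ℤ,
    (((IsEndpoint p a ∧ IsEndpoint (p - 1) b) ∧ (IsEndpoint e a ∧ e ≠ p) ∧
        (IsEndpoint f b ∧ f ≠ p - 1)) ∨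
     ((IsEndpoint p b ∧ IsEndpoint (p - 1) a) ∧ (IsEndpoint e b ∧ e ≠ p) ∧
        (IsEndpoint f a ∧ f ≠ p - 1))) ∧
    c = (max e f, min e f)

/-- `Y` is a set of `d`-admissible arcs closed under adjoining `d`-admissible Ptolemy arcs
of classes I and II. -/
def PtolemyClosed (w : ℤ) (Y : Set Arc) : Prop :=
  (∀ a ∈ Y, IsAdmissible w a) ∧
  ∀ a ∈ Y, ∀ b ∈ Y, ∀ c : Arc,
    (IsPtolemyI a b c ∨ IsPtolemyII a b c) → IsAdmissible w c → c ∈ Y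

/-- The Ptolemy closure of `X`: the smallest set of `d`-admissible arcs containing `X`
and closed under adjoining `d`-admissible Ptolemy arcs of classes I and II. -/
def PtolemyClosure (w : ℤ) (X : Set Arc) : Set Arc :=
  ⋂₀ {Y : Set Arc | X ⊆ Y ∧ PtolemyClosed w Y}

/-- `p` is a left fountain of `A`: infinitely many arcs of `A` have source `p`. -/
def LeftFountain (A : Set Arc) (p : ℤ) : Prop := {a ∈ A | a.1 = p}.Infinite

/-- `p` is a right fountain of `A`: infinitely many arcs of `A` have target `p`. -/
def RightFountain (A : Set Arc) (p : ℤ) : Prop := {a ∈ A | a.2 = p}.Infinite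

/-- The set `X_S = { (t + j, u + j) : (t,u) ∈ S, 0 ≤ j ≤ |w| - 1 }`, corresponding to the
union of the shifted copies `Σ^i S` for `w + 1 ≤ i ≤ 0`. -/
def ShiftFamily (w : ℤ) (S : Set Arc) : Set Arc :=
  {c : Arc | ∃ a ∈ S, ∃ j : ℤ, 0 ≤ j ∧ j ≤ -w - 1 ∧ c = (a.1 + j, a.2 + j)}

lemma cross_comm {a b : Arc} : Cross a b ↔ Cross b a := by
  unfold Cross SharesEndpoint StrictCross
  omega

lemma separated_or_nested_of_not_cross {a c : Arc} (h : ¬ Cross a c) (ha : a.2 < a.1)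
    (hc : c.2 < c.1) : a.1 < c.2 ∨ c.1 < a.2 ∨ OverarcOf a c ∨ OverarcOf c a := by
  unfold Cross SharesEndpoint StrictCross at h
  unfold OverarcOf
  omega

lemma overarcOf_of_not_cross {a c : Arc} {x : ℤ} (h : ¬ Cross c a) (ha : a.2 < a.1)
    (hx : IsEndpoint x a) (hcx : OverarcOfVertex c x) : OverarcOf c a := by
  unfold Cross SharesEndpoint StrictCross at h
  unfold IsEndpoint at hx
  unfold OverarcOfVertex at hcx
  unfold OverarcOf
  omega

section Union

variable {X : Set Arc} {a e : Arc} {p : ℤ}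

lemma isolated_union_singleton :
    Isolated (X ∪ {a}) p ↔ Isolated X p ∧ ¬ IsEndpoint p a := by
  simp only [Isolated, mem_union, mem_singleton_iff, or_imp, forall_and, forall_eq]

lemma innerIsolatedOf_union_singleton :
    InnerIsolatedOf (X ∪ {a}) e p ↔
      InnerIsolatedOf X e p ∧ ¬ IsEndpoint p a ∧
        (OverarcOf e a → ¬ OverarcOfVertex a p) := by
  simp only [InnerIsolatedOf, isolated_union_singleton, mem_union, mem_singleton_iff, or_imp,
    forall_and, forall_eq]
  tauto

lemma innerIsolatedOf_union_of_overarcOf (h : OverarcOf e a) :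
    {p | InnerIsolatedOf (X ∪ {a}) e p} = {p | InnerIsolatedOf X e p} \ Icc a.2 a.1 := by
  ext p
  simp only [mem_ofPred_eq, mem_sdiff, mem_Icc, innerIsolatedOf_union_singleton, IsEndpoint,
    OverarcOfVertex, h, true_implies]
  have := h.2.1
  exact and_congr_right fun _ => by omega

lemma innerIsolatedOf_union_of_not_overarcOf (h : ¬ OverarcOf e a) :
    {p | InnerIsolatedOf (X ∪ {a}) e p} = {p | InnerIsolatedOf X e p} \ {a.1, a.2} := by
  ext p
  simp only [mem_ofPred_eq, mem_sdiff, mem_insert_iff, mem_singleton_iff,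
    innerIsolatedOf_union_singleton, IsEndpoint, h, false_implies, and_true, not_or]

end Union

lemma finite_innerIsolatedOf (X : Set Arc) (c : Arc) : {p | InnerIsolatedOf X c p}.Finite :=
  (finite_Ioo c.2 c.1).subset fun _ hp => hp.2.1

section Span

variable {X : Set Arc} {c : Arc} {p q : ℤ}

lemma innerIsolatedOf_or_exists_target_eq (hpos : ∀ e ∈ X, e.2 < e.1)
    (hX : X.Pairwise fun a b => ¬ Cross a b) (hc : c ∈ X) (hp : c.2 < p) (hpq : p ≤ q)
    (hq : q < c.1)
    (hsep : ∀ m ∈ X, OverarcOf c m → (p ≤ m.2 ∧ m.1 ≤ q) ∨ m.1 < p ∨ q < m.2) :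
    InnerIsolatedOf X c p ∨ ∃ m ∈ X, OverarcOf c m ∧ m.2 = p ∧ m.1 ≤ q := by
  by_cases hiso : Isolated X p
  · refine or_iff_not_imp_left.2 fun hI => ?_
    obtain ⟨m, hm, hcm, hmp⟩ : ∃ m ∈ X, OverarcOf c m ∧ OverarcOfVertex m p := by
      simpa [InnerIsolatedOf, hiso, OverarcOfVertex, hp, hq.trans_le' hpq] using hI
    have := hsep m hm hcm
    unfold OverarcOfVertex at hmp
    omega
  · obtain ⟨m, hm, hpm⟩ : ∃ m ∈ X, IsEndpoint p m := by simpa [Isolated] using hiso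
    have hmc : m ≠ c := by rintro rfl; unfold IsEndpoint at hpm; omega
    have hcm : OverarcOf c m :=
      overarcOf_of_not_cross (hX hc hm hmc.symm) (hpos m hm) hpm ⟨hp, by omega⟩
    have := hsep m hm hcm
    unfold IsEndpoint at hpm
    unfold OverarcOf at hcm
    exact Or.inr ⟨m, hm, hcm, by omega, by omega⟩

/-- `hsep` says that no arc nested in `c` straddles an end of `[p, q]`. Then `[p, q]` is cut
into inner-isolated vertices of `c` and closed spans of arcs nested in `c`: scanning from `p`,
each point is either such a vertex or the target of a nested arc whose span is skipped. -/
theorem span_modEq_ncard_innerIsolatedOf (hpos : ∀ e ∈ X, e.2 < e.1)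
    (hX : X.Pairwise fun a b => ¬ Cross a b) (hc : c ∈ X) {d : ℤ}
    (hd : ∀ m ∈ X, OverarcOf c m → d ∣ m.1 - m.2 + 1)
    (hpq : p ≤ q + 1) (hp : c.2 < p) (hq : q < c.1)
    (hsep : ∀ m ∈ X, OverarcOf c m → (p ≤ m.2 ∧ m.1 ≤ q) ∨ m.1 < p ∨ q < m.2) :
    q - p + 1 ≡ ({r | InnerIsolatedOf X c r} ∩ Icc p q).ncard [ZMOD d] := by
  induction h : (q + 1 - p).toNat using Nat.strong_induction_on generalizing p with
  | _ k ih =>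
  rcases hpq.eq_or_lt with rfl | hlt
  · simp
  rcases innerIsolatedOf_or_exists_target_eq hpos hX hc hp (by omega) hq hsep with
    hI | ⟨m, hm, hcm, rfl, hmq⟩
  · have hsplit : {r | InnerIsolatedOf X c r} ∩ Icc p q =
        insert p ({r | InnerIsolatedOf X c r} ∩ Icc (p + 1) q) := by
      ext r
      simp only [mem_inter_iff, mem_insert_iff, mem_ofPred_eq, mem_Icc]
      constructor
      · rintro ⟨hr, h1, h2⟩
        rcases h1.eq_or_lt with rfl | h1
        exacts [Or.inl rfl, Or.inr ⟨hr, by omega, h2⟩]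
      · rintro (rfl | ⟨hr, h1, h2⟩)
        exacts [⟨hI, le_rfl, by omega⟩, ⟨hr, by omega, h2⟩]
    have hrest := ih _ (by omega) (p := p + 1) (by omega) (by omega) (fun m hm hcm => by
      have := hsep m hm hcm
      have := hI.1 m hm
      unfold IsEndpoint at this
      omega) rfl
    rw [hsplit, ncard_insert_of_notMem (by simp) ((finite_Icc _ _).inter_of_right _)]
    convert hrest.add_right 1 using 2 <;> push_cast <;> ring
  · have hm21 : m.2 < m.1 := hcm.2.1
    have hskip : {r | InnerIsolatedOf X c r} ∩ Icc m.2 q =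
        {r | InnerIsolatedOf X c r} ∩ Icc (m.1 + 1) q := by
      ext r
      simp only [mem_inter_iff, mem_ofPred_eq, mem_Icc]
      refine ⟨fun ⟨hr, _, h2⟩ => ⟨hr, ?_, h2⟩,
        fun ⟨hr, h1, h2⟩ => ⟨hr, by omega, h2⟩⟩
      by_contra! hr'
      have hend := hr.1 m hm
      have hcov := hr.2.2 m hm hcm
      unfold IsEndpoint at hend
      unfold OverarcOfVertex at hcov
      omega
    have hrest := ih _ (by omega) (p := m.1 + 1) (by omega) (by unfold OverarcOf at hcm; omega)
      (fun m' hm' hcm' => by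
        have := hsep m' hm' hcm'
        by_cases hmm' : m = m'
        · subst hmm'; omega
        have := separated_or_nested_of_not_cross (hX hm hm' hmm') (hpos m hm) (hpos m' hm')
        unfold OverarcOf at this
        omega) rfl
    rw [hskip]
    convert hrest.add (Int.modEq_zero_iff_dvd.2 (hd m hm hcm)) using 1 <;> ring

end Span

section HomConfig

variable {w : ℤ} {S : Set Arc} {a c : Arc}

lemma IsAdmissible.target_lt_source (hw : w ≤ -1) (h : IsAdmissible w a) : a.2 < a.1 := by
  have := h.1
  omega

lemma isAdmissible_of_dvd (ha : a.2 < a.1) (h : 1 - w ∣ a.1 - a.2 + 1) :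
    IsAdmissible w a := by
  refine ⟨?_, ?_⟩
  · have := Int.le_of_dvd (by omega) h
    omega
  · rwa [show a.2 - a.1 - 1 = -(a.1 - a.2 + 1) by ring, dvd_neg, show w - 1 = -(1 - w) by ring,
      neg_dvd]

lemma IsHomConfig.target_lt_source (hw : w ≤ -1) (hS : IsHomConfig w S) (ha : a ∈ S) :
    a.2 < a.1 :=
  (hS.1 a ha).target_lt_source hw

lemma IsHomConfig.pairwise_not_cross (hS : IsHomConfig w S) :
    S.Pairwise fun a b => ¬ Cross a b :=
  fun a ha b hb => hS.2.1 a ha b hb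

lemma IsHomConfig.ncard_innerIsolatedOf (hw : w ≤ -1) (hS : IsHomConfig w S) (ha : a ∈ S) :
    ({p | InnerIsolatedOf S a p}.ncard : ℤ) = -w - 1 := by
  have h := hS.2.2.1 a ha
  rw [← (finite_innerIsolatedOf S a).cast_ncard_eq, Nat.cast_inj] at h
  omega

theorem IsHomConfig.dvd_span (hw : w ≤ -1) (hS : IsHomConfig w S) (hc : c ∈ S) :
    1 - w ∣ c.1 - c.2 + 1 := by
  induction h : (c.1 - c.2).toNat using Nat.strong_induction_on generalizing c with
  | _ k ih =>
  have hpos := fun e he => hS.target_lt_source hw (a := e) he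
  have hc' := hpos c hc
  have hmod := span_modEq_ncard_innerIsolatedOf hpos hS.pairwise_not_cross hc (d := 1 - w)
    (fun m hm hcm => ih _ (by unfold OverarcOf at hcm; omega) hm rfl) (p := c.2 + 1)
    (q := c.1 - 1) (by omega) (by omega) (by omega)
    (fun m _ hcm => by unfold OverarcOf at hcm; omega)
  have hall : {r | InnerIsolatedOf S c r} ⊆ Icc (c.2 + 1) (c.1 - 1) := fun r hr => by
    have := hr.2.1
    unfold OverarcOfVertex at this
    exact ⟨by omega, by omega⟩
  rw [inter_eq_left.2 hall, hS.ncard_innerIsolatedOf hw hc] at hmod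
  rw [← Int.modEq_zero_iff_dvd]
  calc c.1 - c.2 + 1 = (c.1 - 1 - (c.2 + 1) + 1) + 2 := by ring
    _ ≡ (-w - 1) + 2 [ZMOD 1 - w] := hmod.add_right 2
    _ = 1 - w := by ring
    _ ≡ 0 [ZMOD 1 - w] := Int.modEq_zero_iff_dvd.2 dvd_rfl

end HomConfig

def gapArcs (P : Set ℤ) (k : ℕ) : Set Arc :=
  {a | a.2 ∈ P ∧ a.1 ∈ P ∧ a.2 < a.1 ∧ (P ∩ Ioo a.2 a.1).ncard = k}

theorem encard_gapArcs {P : Set ℤ} (hP : P.Finite) (k : ℕ) :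
    (gapArcs P k).encard = (P.ncard - (k + 1) : ℕ) := by
  obtain ⟨m, hm⟩ : ∃ m, P.ncard = m := ⟨_, rfl⟩
  rw [hm]
  let e : Fin m ↪o ℤ := hP.toFinset.orderEmbOfFin (by rw [← hm, ncard_eq_toFinset_card P hP])
  have hrange : range e = P := by simp [e, Finset.range_orderEmbOfFin]
  have hbetween (i j : Fin m) (hij : i < j) : (P ∩ Ioo (e i) (e j)).ncard = j - i - 1 := by
    have : P ∩ Ioo (e i) (e j) = e '' Ioo i j := by
      rw [← hrange]
      ext x
      simp only [mem_inter_iff, mem_range, mem_Ioo, mem_image]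
      constructor
      · rintro ⟨⟨l, rfl⟩, h1, h2⟩
        exact ⟨l, ⟨e.lt_iff_lt.1 h1, e.lt_iff_lt.1 h2⟩, rfl⟩
      · rintro ⟨l, ⟨h1, h2⟩, rfl⟩
        exact ⟨⟨l, rfl⟩, e.lt_iff_lt.2 h1, e.lt_iff_lt.2 h2⟩
    rw [this, ncard_image_of_injective _ e.injective, ← Finset.coe_Ioo, ncard_coe_finset,
      Fin.card_Ioo]
  let f : Fin (m - (k + 1)) → Arc := fun i => (e ⟨i + (k + 1), by omega⟩, e ⟨i, by omega⟩)
  have hf : Function.Injective f := fun i j h => by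
    simpa [f, Fin.ext_iff] using e.injective (congrArg Prod.snd h)
  have hgap : gapArcs P k = range f := by
    ext ⟨x, y⟩
    simp only [gapArcs, mem_ofPred_eq, mem_range, f, Prod.mk.injEq]
    constructor
    · rintro ⟨hy, hx, hyx, hk⟩
      obtain ⟨i, rfl⟩ : y ∈ range e := by rwa [hrange]
      obtain ⟨j, rfl⟩ : x ∈ range e := by rwa [hrange]
      have hij := e.lt_iff_lt.1 hyx
      rw [hbetween i j hij] at hk
      refine ⟨⟨i, by omega⟩, ?_, rfl⟩
      congr 1
      ext
      simp only [Fin.lt_def] at hij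
      simp only
      omega
    · rintro ⟨i, rfl, rfl⟩
      have hlt : (⟨i, by omega⟩ : Fin m) < ⟨i + (k + 1), by omega⟩ := by
        simp [Fin.lt_def]
      refine ⟨hrange ▸ mem_range_self _, hrange ▸ mem_range_self _, e.lt_iff_lt.2 hlt, ?_⟩
      rw [hbetween _ _ hlt]
      simp
  rw [hgap, ← image_univ, hf.encard_image, encard_univ, ENat.card_eq_coe_fintype_card,
    Fintype.card_fin]

lemma ncard_inter_Icc {P : Set ℤ} (hP : P.Finite) {x y : ℤ} (hx : x ∈ P) (hy : y ∈ P)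
    (hxy : x < y) : (P ∩ Icc x y).ncard = (P ∩ Ioo x y).ncard + 2 := by
  have : P ∩ Icc x y = insert x (insert y (P ∩ Ioo x y)) := by
    ext r
    simp only [mem_inter_iff, mem_Icc, mem_Ioo, mem_insert_iff]
    constructor
    · rintro ⟨hr, h1, h2⟩
      rcases h1.eq_or_lt with rfl | h1
      · exact Or.inl rfl
      rcases h2.eq_or_lt with rfl | h2
      exacts [Or.inr (Or.inl rfl), Or.inr (Or.inr ⟨hr, h1, h2⟩)]
    · rintro (rfl | rfl | ⟨hr, h1, h2⟩)
      exacts [⟨hx, le_rfl, hxy.le⟩, ⟨hy, hxy.le, le_rfl⟩, ⟨hr, h1.le, h2.le⟩]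
  have hfin : (P ∩ Ioo x y).Finite := hP.inter_of_left _
  rw [this, ncard_insert_of_notMem (by simp [hxy.ne]) (hfin.insert y),
    ncard_insert_of_notMem (by simp) hfin]

lemma encard_eq_toNat_of_ncard {P : Set ℤ} (hP : P.Finite) {k : ℤ} (h : (P.ncard : ℤ) = k) :
    P.encard = (k.toNat : ℕ∞) := by
  rw [← hP.cast_ncard_eq, Nat.cast_inj]
  omega

section Surgery

variable {T : Set Arc} {a b e : Arc} {p : ℤ}

lemma not_cross_of_innerIsolatedOf (hpos : ∀ e ∈ T, e.2 < e.1)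
    (hT : T.Pairwise fun a b => ¬ Cross a b) (hb : b ∈ T)
    (ha1 : InnerIsolatedOf T b a.1) (ha2 : InnerIsolatedOf T b a.2) (he : e ∈ T) :
    ¬ Cross e a := by
  have h1 := ha1.1 e he
  have h2 := ha2.1 e he
  have hb1 := ha1.2.1
  have hb2 := ha2.2.1
  unfold IsEndpoint at h1 h2
  unfold OverarcOfVertex at hb1 hb2
  rintro (hshare | hcross)
  · unfold SharesEndpoint at hshare
    omega
  have heb : e ≠ b := by rintro rfl; unfold StrictCross at hcross; omega
  have hbe (x : ℤ) (hx : IsEndpoint x e) (hxb : OverarcOfVertex b x) : OverarcOf b e :=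
    overarcOf_of_not_cross (hT hb he heb.symm) (hpos e he) hx hxb
  unfold StrictCross at hcross
  rcases hcross with h | h
  · exact ha2.2.2 e he (hbe e.1 (Or.inl rfl) ⟨by omega, by omega⟩) ⟨h.1, h.2.1⟩
  · exact ha1.2.2 e he (hbe e.2 (Or.inr rfl) ⟨by omega, by omega⟩) ⟨h.2.1, h.2.2⟩

lemma innerIsolatedOf_union_self (hpos : ∀ e ∈ T, e.2 < e.1)
    (hT : T.Pairwise fun a b => ¬ Cross a b) (hb : b ∈ T) (ha : a.2 < a.1)
    (ha1 : InnerIsolatedOf T b a.1) (ha2 : InnerIsolatedOf T b a.2) :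
    {p | InnerIsolatedOf (T ∪ {a}) a p} = {p | InnerIsolatedOf T b p} ∩ Ioo a.2 a.1 := by
  have hb1 := ha1.2.1
  have hb2 := ha2.2.1
  unfold OverarcOfVertex at hb1 hb2
  ext p
  simp only [mem_ofPred_eq, mem_inter_iff, mem_Ioo, innerIsolatedOf_union_singleton]
  constructor
  · rintro ⟨⟨hiso, ⟨hp2, hp1⟩, hcl⟩, -, -⟩
    refine ⟨⟨hiso, ⟨by omega, by omega⟩, fun c hc hbc hcp => ?_⟩, hp2, hp1⟩
    unfold OverarcOfVertex at hcp
    rcases separated_or_nested_of_not_cross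
      (not_cross_of_innerIsolatedOf hpos hT hb ha1 ha2 hc) (hpos c hc) ha with h | h | h | h
    · omega
    · omega
    · exact ha1.2.2 c hc hbc ⟨h.1.trans h.2.1, h.2.2⟩
    · exact hcl c hc h ⟨hcp.1, hcp.2⟩
  · rintro ⟨⟨hiso, -, hcl⟩, hp2, hp1⟩
    refine ⟨⟨hiso, ⟨hp2, hp1⟩, fun c hc hac => hcl c hc ?_⟩, ?_,
      fun h => (lt_irrefl _ h.1).elim⟩
    · unfold OverarcOf at hac ⊢
      omega
    · unfold IsEndpoint
      omega

lemma innerIsolatedOf_union_iff_of_ne (hpos : ∀ e ∈ T, e.2 < e.1)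
    (hT : T.Pairwise fun a b => ¬ Cross a b) (hb : b ∈ T)
    (ha1 : InnerIsolatedOf T b a.1) (ha2 : InnerIsolatedOf T b a.2) (he : e ∈ T) (heb : e ≠ b) :
    InnerIsolatedOf (T ∪ {a}) e p ↔ InnerIsolatedOf T e p := by
  rw [innerIsolatedOf_union_singleton, and_iff_left_iff_imp]
  intro hI
  have hb1 := ha1.2.1
  have hb2 := ha2.2.1
  have hep := hI.2.1
  unfold OverarcOfVertex at hb1 hb2 hep
  unfold IsEndpoint OverarcOf OverarcOfVertex
  rcases separated_or_nested_of_not_cross (hT he hb heb) (hpos e he) (hpos b hb) with h | h | h | h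
  · omega
  · omega
  · have hpb := hI.1 b hb
    have hpb' := hI.2.2 b hb h
    unfold IsEndpoint at hpb
    unfold OverarcOfVertex at hpb'
    omega
  · have h1 := ha1.2.2 e he h
    have h2 := ha2.2.2 e he h
    unfold OverarcOfVertex at h1 h2
    omega

lemma outerIsolated_union_iff (hb : b ∈ T) (hba : OverarcOf b a) :
    OuterIsolated (T ∪ {a}) p ↔ OuterIsolated T p := by
  constructor
  · rintro ⟨hiso, hcov⟩
    exact ⟨fun c hc => hiso c (Or.inl hc), fun c hc => hcov c (Or.inl hc)⟩
  · rintro ⟨hiso, hcov⟩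
    have h1 := hiso b hb
    have h2 := hcov b hb
    unfold IsEndpoint at h1
    unfold OverarcOfVertex at h2
    unfold OverarcOf at hba
    refine ⟨isolated_union_singleton.2 ⟨hiso, by unfold IsEndpoint; omega⟩, ?_⟩
    rintro c (hc | rfl)
    exacts [hcov c hc, by unfold OverarcOfVertex; omega]

end Surgery

def IsMinimalOverarc (S : Set Arc) (b s : Arc) : Prop :=
  b ∈ S ∧ OverarcOf b s ∧ ∀ c ∈ S, OverarcOf b c → ¬ OverarcOf c s

section MinimalOverarc

variable {w : ℤ} {S : Set Arc} {s b a : Arc}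

lemma exists_isMinimalOverarc (h : ∃ b ∈ S, OverarcOf b s) : ∃ b, IsMinimalOverarc S b s := by
  obtain ⟨b, ⟨hb, hbs⟩, hmin⟩ :=
    (measure fun c : Arc => (c.1 - c.2).toNat).wf.has_min {c | c ∈ S ∧ OverarcOf c s} h
  refine ⟨b, hb, hbs, fun c hc hbc hcs => hmin c ⟨hc, hcs⟩ ?_⟩
  unfold OverarcOf at hbc
  show (c.1 - c.2).toNat < (b.1 - b.2).toNat
  omega

lemma IsMinimalOverarc.mem_sdiff (hb : IsMinimalOverarc S b s) : b ∈ S \ {s} :=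
  ⟨hb.1, by rintro rfl; exact lt_irrefl _ hb.2.1.1⟩

lemma IsMinimalOverarc.innerIsolatedOf_sdiff (hS : S.Pairwise fun a b => ¬ Cross a b)
    (hs : s ∈ S) (hb : IsMinimalOverarc S b s) {x : ℤ} (hx : IsEndpoint x s) :
    InnerIsolatedOf (S \ {s}) b x := by
  obtain ⟨-, hbs, hmin⟩ := hb
  refine ⟨fun e he hxe => hS hs he.1 (Ne.symm he.2) (Or.inl ?_), ?_, fun c hc hbc hcx =>
    hmin c hc.1 hbc (overarcOf_of_not_cross (hS hc.1 hs hc.2) hbs.2.1 hx hcx)⟩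
  · unfold IsEndpoint at hx hxe
    unfold SharesEndpoint
    omega
  · unfold IsEndpoint at hx
    unfold OverarcOf at hbs
    exact ⟨by omega, by omega⟩

theorem ncard_innerIsolatedOf_sdiff (hw : w ≤ -1) (hS : IsHomConfig w S) (hs : s ∈ S)
    (hb : IsMinimalOverarc S b s) :
    ({p | InnerIsolatedOf (S \ {s}) b p}.ncard : ℤ) = -2 * w := by
  have hpos : ∀ e ∈ S \ {s}, e.2 < e.1 := fun e he => hS.target_lt_source hw he.1
  have hT := hS.pairwise_not_cross.mono (sdiff_subset (t := {s}))
  have hTs : S \ {s} ∪ {s} = S := sdiff_union_of_subset (singleton_subset_iff.2 hs)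
  have hs1 := hb.innerIsolatedOf_sdiff hS.pairwise_not_cross hs (Or.inl rfl)
  have hs2 := hb.innerIsolatedOf_sdiff hS.pairwise_not_cross hs (Or.inr rfl)
  have hss := hb.2.1.2.1
  have hIb := innerIsolatedOf_union_of_overarcOf (X := S \ {s}) hb.2.1
  have hIs := innerIsolatedOf_union_self hpos hT hb.mem_sdiff hss hs1 hs2
  rw [hTs] at hIb hIs
  have hb' := hS.ncard_innerIsolatedOf hw hb.1
  have hs' := hS.ncard_innerIsolatedOf hw hs
  rw [hIb] at hb'
  rw [hIs] at hs'
  have hfin := finite_innerIsolatedOf (S \ {s}) b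
  have := ncard_inter_Icc hfin hs2 hs1 hss
  have := ncard_inter_add_ncard_sdiff_eq_ncard _ (Icc s.2 s.1) hfin
  omega

end MinimalOverarc

section Replacement

variable {w : ℤ} {S : Set Arc} {s b a : Arc}

theorem isAdmissible_of_mem_gapArcs (hw : w ≤ -1) (hS : IsHomConfig w S) (hs : s ∈ S)
    (hb : IsMinimalOverarc S b s)
    (ha : a ∈ gapArcs {p | InnerIsolatedOf (S \ {s}) b p} (-w - 1).toNat) :
    IsAdmissible w a := by
  obtain ⟨ha2, ha1, ha, hgap⟩ := ha
  have hpos : ∀ e ∈ S \ {s}, e.2 < e.1 := fun e he => hS.target_lt_source hw he.1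
  have hb1 := ha1.2.1
  have hb2 := ha2.2.1
  unfold OverarcOfVertex at hb1 hb2
  have hmod := span_modEq_ncard_innerIsolatedOf hpos (hS.pairwise_not_cross.mono sdiff_subset)
    hb.mem_sdiff (d := 1 - w) (fun m hm _ => hS.dvd_span hw hm.1) (by omega) hb2.1 hb1.2
    (fun m hm hbm => by
      have h1 := ha1.1 m hm
      have h2 := ha2.1 m hm
      have h3 := ha1.2.2 m hm hbm
      have h4 := ha2.2.2 m hm hbm
      have := hpos m hm
      unfold IsEndpoint at h1 h2
      unfold OverarcOfVertex at h3 h4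
      omega)
  have hfin := finite_innerIsolatedOf (S \ {s}) b
  have hP := ncard_innerIsolatedOf_sdiff hw hS hs hb
  have hIcc := ncard_inter_Icc hfin ha2 ha1 ha
  refine isAdmissible_of_dvd ha (Int.modEq_zero_iff_dvd.1 (hmod.trans ?_))
  rw [hIcc, hgap, Int.modEq_zero_iff_dvd]
  exact ⟨1, by omega⟩

theorem isHomConfig_sdiff_union_of_mem_gapArcs (hw : w ≤ -1) (hS : IsHomConfig w S)
    (hs : s ∈ S) (hb : IsMinimalOverarc S b s)
    (ha : a ∈ gapArcs {p | InnerIsolatedOf (S \ {s}) b p} (-w - 1).toNat) :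
    IsHomConfig w (S \ {s} ∪ {a}) := by
  have hadm := isAdmissible_of_mem_gapArcs hw hS hs hb ha
  obtain ⟨ha2, ha1, ha, hgap⟩ := ha
  have hpos : ∀ e ∈ S \ {s}, e.2 < e.1 := fun e he => hS.target_lt_source hw he.1
  have hT := hS.pairwise_not_cross.mono (sdiff_subset (t := {s}))
  have hTs : S \ {s} ∪ {s} = S := sdiff_union_of_subset (singleton_subset_iff.2 hs)
  have hbT := hb.mem_sdiff
  have hba : OverarcOf b a := ⟨ha2.2.1.1, ha, ha1.2.1.2⟩
  have hs1 := hb.innerIsolatedOf_sdiff hS.pairwise_not_cross hs (Or.inl rfl)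
  have hs2 := hb.innerIsolatedOf_sdiff hS.pairwise_not_cross hs (Or.inr rfl)
  have hfin := finite_innerIsolatedOf (S \ {s}) b
  refine ⟨?_, ?_, ?_, ?_⟩
  · rintro c (hc | rfl)
    exacts [hS.1 c hc.1, hadm]
  · have hpair : (S \ {s} ∪ {a}).Pairwise fun a b => ¬ Cross a b := by
      rw [union_singleton]
      refine pairwise_insert.2 ⟨hT, fun e he _ => ⟨?_, ?_⟩⟩
      · rw [cross_comm]
        exact not_cross_of_innerIsolatedOf hpos hT hbT ha1 ha2 he
      · exact not_cross_of_innerIsolatedOf hpos hT hbT ha1 ha2 he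
    exact fun x hx y hy => hpair hx hy
  · rintro e (he | rfl)
    · by_cases heb : e = b
      · subst heb
        rw [innerIsolatedOf_union_of_overarcOf hba]
        refine encard_eq_toNat_of_ncard hfin.sdiff ?_
        have := ncard_inter_Icc hfin ha2 ha1 ha
        have := ncard_inter_add_ncard_sdiff_eq_ncard _ (Icc a.2 a.1) hfin
        have := ncard_innerIsolatedOf_sdiff hw hS hs hb
        omega
      · have hsame :
            {p | InnerIsolatedOf (S \ {s} ∪ {a}) e p} = {p | InnerIsolatedOf S e p} := by
          ext p
          have hs' := innerIsolatedOf_union_iff_of_ne (p := p) hpos hT hbT hs1 hs2 he heb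
          rw [hTs] at hs'
          exact (innerIsolatedOf_union_iff_of_ne hpos hT hbT ha1 ha2 he heb).trans hs'.symm
        rw [hsame]
        exact hS.2.2.1 e he.1
    · rw [innerIsolatedOf_union_self hpos hT hbT ha ha1 ha2]
      refine encard_eq_toNat_of_ncard (hfin.inter_of_left _) ?_
      omega
  · have hsame : {p | OuterIsolated (S \ {s} ∪ {a}) p} = {p | OuterIsolated S p} := by
      ext p
      have hs' := outerIsolated_union_iff (p := p) hbT hb.2.1
      rw [hTs] at hs'
      exact (outerIsolated_union_iff hbT hba).trans hs'.symm
    rw [hsame]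
    exact hS.2.2.2

theorem mem_gapArcs_of_isHomConfig_sdiff_union (hw : w ≤ -1) (hS : IsHomConfig w S)
    (hs : s ∈ S) (hb : IsMinimalOverarc S b s) (ha : IsAdmissible w a)
    (hSa : IsHomConfig w (S \ {s} ∪ {a})) :
    a ∈ gapArcs {p | InnerIsolatedOf (S \ {s}) b p} (-w - 1).toNat := by
  have hfin := finite_innerIsolatedOf (S \ {s}) b
  have hP := ncard_innerIsolatedOf_sdiff hw hS hs hb
  have hcount := hSa.ncard_innerIsolatedOf hw (Or.inl hb.mem_sdiff)
  have ha' := ha.target_lt_source hw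
  have haT : a ∉ S \ {s} := by
    intro haT
    rw [union_eq_self_of_subset_right (singleton_subset_iff.2 haT)] at hcount
    omega
  have hcross (e) (he : e ∈ S \ {s}) : ¬ Cross e a :=
    hSa.2.1 e (Or.inl he) a (Or.inr rfl) (ne_of_mem_of_not_mem he haT)
  have hba : OverarcOf b a := by
    by_contra hba
    rw [innerIsolatedOf_union_of_not_overarcOf hba] at hcount
    have hle := ncard_le_ncard_sdiff_add_ncard {p | InnerIsolatedOf (S \ {s}) b p} {a.1, a.2}
    rw [ncard_pair ha'.ne'] at hle
    have hsub : {p | InnerIsolatedOf (S \ {s}) b p} ⊆ {a.1, a.2} := by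
      rw [← sdiff_eq_empty, ← ncard_eq_zero hfin.sdiff]
      omega
    have hs1 := hsub (hb.innerIsolatedOf_sdiff hS.pairwise_not_cross hs (Or.inl rfl))
    have hs2 := hsub (hb.innerIsolatedOf_sdiff hS.pairwise_not_cross hs (Or.inr rfl))
    have hbs := hb.2.1
    simp only [mem_insert_iff, mem_singleton_iff] at hs1 hs2
    unfold OverarcOf at hba hbs
    omega
  rw [innerIsolatedOf_union_of_overarcOf hba] at hcount
  have hsplit := ncard_inter_add_ncard_sdiff_eq_ncard _ (Icc a.2 a.1) hfin
  obtain ⟨r, hr, hra1, hra2⟩ : ({p | InnerIsolatedOf (S \ {s}) b p} ∩ Icc a.2 a.1).Nonempty :=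
    nonempty_of_ncard_ne_zero (by omega)
  have hend (x : ℤ) (hx : IsEndpoint x a) : InnerIsolatedOf (S \ {s}) b x := by
    unfold OverarcOf at hba
    refine ⟨fun e he hxe => hcross e he (Or.inl ?_), ?_, fun c hc hbc hcx => ?_⟩
    · unfold IsEndpoint at hx hxe
      unfold SharesEndpoint
      omega
    · unfold IsEndpoint at hx
      exact ⟨by omega, by omega⟩
    · have hca := overarcOf_of_not_cross (hcross c hc) ha' hx hcx
      unfold OverarcOf at hca
      exact hr.2.2 c hc hbc ⟨by omega, by omega⟩
  have ha1 := hend a.1 (Or.inl rfl)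
  have ha2 := hend a.2 (Or.inr rfl)
  have := ncard_inter_Icc hfin ha2 ha1 ha'
  exact ⟨ha2, ha1, ha', by omega⟩

end Replacement

/-- if `s` is an arc of a combinatorial `w`-Hom configuration `S` (`w ≤ -1`)
having an overarc in `S`, then there are exactly `|w|` `d`-admissible arcs `a` such that
`(S \ {s}) ∪ {a}` is a combinatorial `w`-Hom configuration, one of them being `s` itself;
equivalently, `s` has exactly `|w| - 1` replacements. -/
theorem stmt_6 (w : ℤ) (hw : w ≤ -1) (S : Set Arc) (hS : IsHomConfig w S)
    (s : Arc) (hs : s ∈ S) (hover : ∃ b ∈ S, OverarcOf b s) :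
    {a : Arc | IsAdmissible w a ∧ IsHomConfig w ((S \ {s}) ∪ {a})}.encard
        = ((-w).toNat : ℕ∞) ∧
      s ∈ {a : Arc | IsAdmissible w a ∧ IsHomConfig w ((S \ {s}) ∪ {a})} ∧
      {t : Arc | IsReplacement w S s t}.encard = ((-w - 1).toNat : ℕ∞) := by
  obtain ⟨b, hb⟩ := exists_isMinimalOverarc hover
  set A := {a : Arc | IsAdmissible w a ∧ IsHomConfig w ((S \ {s}) ∪ {a})}
  have hA : A = gapArcs {p | InnerIsolatedOf (S \ {s}) b p} (-w - 1).toNat :=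
    ext fun a => ⟨fun h => mem_gapArcs_of_isHomConfig_sdiff_union hw hS hs hb h.1 h.2,
      fun h => ⟨isAdmissible_of_mem_gapArcs hw hS hs hb h,
        isHomConfig_sdiff_union_of_mem_gapArcs hw hS hs hb h⟩⟩
  have hsA : s ∈ A := ⟨hS.1 s hs, by rwa [sdiff_union_of_subset (singleton_subset_iff.2 hs)]⟩
  have hcard : A.encard = ((-w).toNat : ℕ∞) := by
    have := ncard_innerIsolatedOf_sdiff hw hS hs hb
    rw [hA, encard_gapArcs (finite_innerIsolatedOf _ _)]
    congr 1
    omega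
  have hrep : {t | IsReplacement w S s t} = A \ {s} :=
    ext fun t => ⟨fun ⟨hne, h⟩ => ⟨⟨h.1 t (Or.inr rfl), h⟩, hne⟩,
      fun ⟨⟨_, h⟩, hne⟩ => ⟨hne, h⟩⟩
  refine ⟨hcard, hsA, ?_⟩
  rw [hrep, encard_sdiff_singleton_of_mem hsA, hcard, ← Nat.cast_one, ← ENat.natCast_sub]
  congr 1
  omega
end

section
/- Let w ≤ -1 be an integer, let S be a combinatorial w-Hom configuration, let s ∈ S, and let s* be a replacement of s. Then the combinatorial w-Hom configuration (S \ {s}) ∪ {s*} has the same number of outer-isolated vertices as S. -/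
open Set

-- ## auxiliary lemmas

lemma arc_lt {w : ℤ} (hw : w ≤ -1) {a : Arc} (h : IsAdmissible w a) : a.2 < a.1 := by
  obtain ⟨h1, _⟩ := h; omega

lemma tri {a b : Arc} (ha : a.2 < a.1) (hb : b.2 < b.1) (h : ¬ Cross a b) :
    OverarcOf a b ∨ OverarcOf b a ∨ a.1 < b.2 ∨ b.1 < a.2 := by
  unfold Cross SharesEndpoint StrictCross at h
  unfold OverarcOf
  omega

lemma tri' {w : ℤ} (hw : w ≤ -1) {X : Set Arc} (hX : IsHomConfig w X)
    {a c : Arc} (ha : a ∈ X) (hc : c ∈ X) (hne : a ≠ c) :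
    OverarcOf a c ∨ OverarcOf c a ∨ a.1 < c.2 ∨ c.1 < a.2 :=
  tri (arc_lt hw (hX.1 a ha)) (arc_lt hw (hX.1 c hc)) (hX.2.1 a ha c hc hne)

lemma isolated_union_iff {T : Set Arc} {a : Arc} {p : ℤ} :
    Isolated (T ∪ {a}) p ↔ Isolated T p ∧ ¬ IsEndpoint p a := by
  constructor
  · exact fun h => ⟨fun c hc => h c (Or.inl hc), h a (Or.inr rfl)⟩
  · rintro ⟨h1, h2⟩ c hc
    rcases hc with hc | hc
    · exact h1 c hc
    · rw [Set.mem_singleton_iff] at hc; subst hc; exact h2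

lemma isolated_endpoints {w : ℤ} {T : Set Arc} {a : Arc}
    (hX : IsHomConfig w (T ∪ {a})) (haT : a ∉ T) :
    Isolated T a.1 ∧ Isolated T a.2 := by
  constructor <;> intro c hcT hend <;>
    exact hX.2.1 a (Or.inr rfl) c (Or.inl hcT) (fun h => haT (by rw [h]; exact hcT))
      (Or.inl (by unfold IsEndpoint at hend; unfold SharesEndpoint; tauto))

lemma exists_innermost {T : Set Arc} {a : Arc} (h : ∃ b ∈ T, OverarcOf b a) :
    ∃ b ∈ T, OverarcOf b a ∧ ∀ c ∈ T, OverarcOf b c → ¬ OverarcOf c a := by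
  classical
  have hbdd : ∃ lb : ℤ, ∀ z : ℤ, (∃ b ∈ T, OverarcOf b a ∧ b.1 = z) → lb ≤ z := by
    refine ⟨a.1, ?_⟩
    rintro z ⟨b, hbT, hb, rfl⟩
    have := hb.2.2
    omega
  have hinh : ∃ z : ℤ, ∃ b ∈ T, OverarcOf b a ∧ b.1 = z := by
    obtain ⟨b, hbT, hb⟩ := h; exact ⟨b.1, b, hbT, hb, rfl⟩
  obtain ⟨lb, ⟨b, hbT, hb, hb1⟩, hleast⟩ := Int.exists_least_of_bdd hbdd hinh
  refine ⟨b, hbT, hb, ?_⟩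
  intro c hcT hbc hca
  have := hleast c.1 ⟨c, hcT, hca, rfl⟩
  unfold OverarcOf at hbc
  omega

lemma lemB {T : Set Arc} {a b : Arc}
    (hnb : ¬ OverarcOf b a)
    (hend : ∀ p : ℤ, OverarcOfVertex b p → ¬ IsEndpoint p a) :
    {p : ℤ | InnerIsolatedOf (T ∪ {a}) b p} = {p : ℤ | InnerIsolatedOf T b p} := by
  ext p
  simp only [Set.mem_setOf_eq]
  constructor
  · rintro ⟨h1, h2, h3⟩
    exact ⟨fun c hc => h1 c (Or.inl hc), h2, fun c hc => h3 c (Or.inl hc)⟩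
  · rintro ⟨h1, h2, h3⟩
    refine ⟨?_, h2, ?_⟩
    · intro c hc
      rcases hc with hc | hc
      · exact h1 c hc
      · rw [Set.mem_singleton_iff] at hc; subst hc; exact hend p h2
    · intro c hc hbc
      rcases hc with hc | hc
      · exact h3 c hc hbc
      · rw [Set.mem_singleton_iff] at hc; subst hc; exact absurd hbc hnb

lemma lemA {w : ℤ} (hw : w ≤ -1) {T : Set Arc} {a b : Arc}
    (hX : IsHomConfig w (T ∪ {a})) (haT : a ∉ T) (hbT : b ∈ T)
    (hba : OverarcOf b a)
    (hinner : ∀ c ∈ T, OverarcOf b c → ¬ OverarcOf c a) :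
    {p : ℤ | InnerIsolatedOf T b p}.encard
      = ((((-w-1).toNat + (2 + (-w-1).toNat)) : ℕ) : ℕ∞) := by
  have haX : a ∈ T ∪ {a} := Or.inr rfl
  have hbX : b ∈ T ∪ {a} := Or.inl hbT
  have haa : a.2 < a.1 := arc_lt hw (hX.1 a haX)
  have hisoa := isolated_endpoints hX haT
  have hset : {p : ℤ | InnerIsolatedOf T b p}
      = {p : ℤ | InnerIsolatedOf (T ∪ {a}) b p}
        ∪ (({a.1, a.2} : Set ℤ) ∪ {p : ℤ | InnerIsolatedOf (T ∪ {a}) a p}) := by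
    ext p
    simp only [Set.mem_setOf_eq, Set.mem_union, Set.mem_insert_iff, Set.mem_singleton_iff]
    constructor
    · rintro ⟨hiso, hov, hmin⟩
      by_cases hpa : p = a.1 ∨ p = a.2
      · exact Or.inr (Or.inl hpa)
      · have hisoX : Isolated (T ∪ {a}) p :=
          isolated_union_iff.2 ⟨hiso, by unfold IsEndpoint; tauto⟩
        by_cases hova : OverarcOfVertex a p
        · refine Or.inr (Or.inr ⟨hisoX, hova, ?_⟩)
          intro c hc hac
          rcases hc with hc | hc
          · refine hmin c hc ?_
            unfold OverarcOf at *
            omega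
          · rw [Set.mem_singleton_iff] at hc; subst hc
            unfold OverarcOf at hac; omega
        · refine Or.inl ⟨hisoX, hov, ?_⟩
          intro c hc hbc
          rcases hc with hc | hc
          · exact hmin c hc hbc
          · rw [Set.mem_singleton_iff] at hc; subst hc; exact hova
    · rintro (h | h | h)
      · exact ⟨fun c hc => h.1 c (Or.inl hc), h.2.1, fun c hc => h.2.2 c (Or.inl hc)⟩
      · have hisol : Isolated T p := by
          rcases h with h | h
          · subst h; exact hisoa.1
          · subst h; exact hisoa.2
        refine ⟨hisol, by unfold OverarcOf at hba; unfold OverarcOfVertex; omega, ?_⟩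
        intro c hcT hbc hovc
        have hne : a ≠ c := fun hh => haT (by rw [hh]; exact hcT)
        have hnca := hinner c hcT hbc
        rcases tri' hw hX haX (Or.inl hcT) hne with htri | htri | htri | htri <;>
          unfold OverarcOf OverarcOfVertex at * <;> omega
      · refine ⟨fun c hc => h.1 c (Or.inl hc), ?_, ?_⟩
        · have := h.2.1; unfold OverarcOf at hba; unfold OverarcOfVertex at *; omega
        · intro c hcT hbc hovc
          have hne : a ≠ c := fun hh => haT (by rw [hh]; exact hcT)
          have hnca := hinner c hcT hbc
          have hmin := h.2.2 c (Or.inl hcT)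
          have hovp := h.2.1
          rcases tri' hw hX haX (Or.inl hcT) hne with htri | htri | htri | htri
          · exact hmin htri hovc
          · exact hnca htri
          · unfold OverarcOfVertex at *; omega
          · unfold OverarcOfVertex at *; omega
  have hd1 : Disjoint {p : ℤ | InnerIsolatedOf (T ∪ {a}) b p}
      (({a.1, a.2} : Set ℤ) ∪ {p : ℤ | InnerIsolatedOf (T ∪ {a}) a p}) := by
    rw [Set.disjoint_left]
    rintro p hp hmem
    rcases hmem with hmem | hmem
    · rcases hmem with hh | hh <;> exact hp.1 a haX (by unfold IsEndpoint; tauto)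
    · exact hp.2.2 a haX hba hmem.2.1
  have hd2 : Disjoint ({a.1, a.2} : Set ℤ) {p : ℤ | InnerIsolatedOf (T ∪ {a}) a p} := by
    rw [Set.disjoint_left]
    rintro p hp hmem
    rcases hp with hh | hh <;> exact hmem.1 a haX (by unfold IsEndpoint; tauto)
  rw [hset, Set.encard_union_eq hd1, Set.encard_union_eq hd2,
    hX.2.2.1 b hbX, hX.2.2.1 a haX, Set.encard_pair (by omega : a.1 ≠ a.2)]
  push_cast
  ring

lemma lemD {w : ℤ} (hw : w ≤ -1) {T : Set Arc} {a : Arc}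
    (hX : IsHomConfig w (T ∪ {a})) (haT : a ∉ T)
    (hno : ∀ b ∈ T, ¬ OverarcOf b a) :
    {p : ℤ | OuterIsolated T p}.encard
      = {p : ℤ | OuterIsolated (T ∪ {a}) p}.encard + (((2 + (-w-1).toNat) : ℕ) : ℕ∞) := by
  have haX : a ∈ T ∪ {a} := Or.inr rfl
  have haa : a.2 < a.1 := arc_lt hw (hX.1 a haX)
  have hisoa := isolated_endpoints hX haT
  have hset : {p : ℤ | OuterIsolated T p}
      = {p : ℤ | OuterIsolated (T ∪ {a}) p}
        ∪ (({a.1, a.2} : Set ℤ) ∪ {p : ℤ | InnerIsolatedOf (T ∪ {a}) a p}) := by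
    ext p
    simp only [Set.mem_setOf_eq, Set.mem_union, Set.mem_insert_iff, Set.mem_singleton_iff]
    constructor
    · rintro ⟨hiso, hov⟩
      by_cases hpa : p = a.1 ∨ p = a.2
      · exact Or.inr (Or.inl hpa)
      · have hisoX : Isolated (T ∪ {a}) p :=
          isolated_union_iff.2 ⟨hiso, by unfold IsEndpoint; tauto⟩
        by_cases hova : OverarcOfVertex a p
        · refine Or.inr (Or.inr ⟨hisoX, hova, ?_⟩)
          intro c hc hac
          rcases hc with hc | hc
          · exact hov c hc
          · rw [Set.mem_singleton_iff] at hc; subst hc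
            unfold OverarcOf at hac; omega
        · refine Or.inl ⟨hisoX, ?_⟩
          intro c hc
          rcases hc with hc | hc
          · exact hov c hc
          · rw [Set.mem_singleton_iff] at hc; subst hc; exact hova
    · rintro (h | h | h)
      · exact ⟨fun c hc => h.1 c (Or.inl hc), fun c hc => h.2 c (Or.inl hc)⟩
      · have hisol : Isolated T p := by
          rcases h with h | h
          · subst h; exact hisoa.1
          · subst h; exact hisoa.2
        refine ⟨hisol, ?_⟩
        intro c hcT hovc
        have hne : a ≠ c := fun hh => haT (by rw [hh]; exact hcT)
        have hnca := hno c hcT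
        rcases tri' hw hX haX (Or.inl hcT) hne with htri | htri | htri | htri <;>
          unfold OverarcOf OverarcOfVertex at * <;> omega
      · refine ⟨fun c hc => h.1 c (Or.inl hc), ?_⟩
        intro c hcT hovc
        have hne : a ≠ c := fun hh => haT (by rw [hh]; exact hcT)
        have hnca := hno c hcT
        have hmin := h.2.2 c (Or.inl hcT)
        have hovp := h.2.1
        rcases tri' hw hX haX (Or.inl hcT) hne with htri | htri | htri | htri
        · exact hmin htri hovc
        · exact hnca htri
        · unfold OverarcOfVertex at *; omega
        · unfold OverarcOfVertex at *; omega
  have hd1 : Disjoint {p : ℤ | OuterIsolated (T ∪ {a}) p}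
      (({a.1, a.2} : Set ℤ) ∪ {p : ℤ | InnerIsolatedOf (T ∪ {a}) a p}) := by
    rw [Set.disjoint_left]
    rintro p hp hmem
    rcases hmem with hmem | hmem
    · rcases hmem with hh | hh <;> exact hp.1 a haX (by unfold IsEndpoint; tauto)
    · exact hp.2 a haX hmem.2.1
  have hd2 : Disjoint ({a.1, a.2} : Set ℤ) {p : ℤ | InnerIsolatedOf (T ∪ {a}) a p} := by
    rw [Set.disjoint_left]
    rintro p hp hmem
    rcases hp with hh | hh <;> exact hmem.1 a haX (by unfold IsEndpoint; tauto)
  rw [hset, Set.encard_union_eq hd1, Set.encard_union_eq hd2,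
    hX.2.2.1 a haX, Set.encard_pair (by omega : a.1 ≠ a.2)]
  push_cast
  ring

lemma lemE {T : Set Arc} {a b : Arc} (hbT : b ∈ T) (hba : OverarcOf b a) :
    {p : ℤ | OuterIsolated (T ∪ {a}) p} = {p : ℤ | OuterIsolated T p} := by
  ext p
  simp only [Set.mem_setOf_eq]
  constructor
  · rintro ⟨h1, h2⟩
    exact ⟨fun c hc => h1 c (Or.inl hc), fun c hc => h2 c (Or.inl hc)⟩
  · rintro ⟨h1, h2⟩
    have hb := h2 b hbT
    constructor
    · intro c hc
      rcases hc with hc | hc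
      · exact h1 c hc
      · rw [Set.mem_singleton_iff] at hc; subst hc
        intro hend
        unfold OverarcOf at hba; unfold OverarcOfVertex at hb; unfold IsEndpoint at hend
        omega
    · intro c hc
      rcases hc with hc | hc
      · exact h2 c hc
      · rw [Set.mem_singleton_iff] at hc; subst hc
        unfold OverarcOf at hba; unfold OverarcOfVertex at *
        omega

lemma lemC {w : ℤ} (hw : w ≤ -1) {T : Set Arc} {a a' b : Arc}
    (hX : IsHomConfig w (T ∪ {a})) (hX' : IsHomConfig w (T ∪ {a'}))
    (haT : a ∉ T) (hbT : b ∈ T) (hba : OverarcOf b a)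
    (hinner : ∀ c ∈ T, OverarcOf b c → ¬ OverarcOf c a) :
    OverarcOf b a' := by
  by_contra hno
  have hA := lemA hw hX haT hbT hba hinner
  have hk : {p : ℤ | InnerIsolatedOf T b p}.encard = (((-w-1).toNat : ℕ) : ℕ∞) := by
    by_cases ha'T : a' ∈ T
    · have hTT : T ∪ {a'} = T :=
        Set.union_eq_self_of_subset_right (Set.singleton_subset_iff.2 ha'T)
      have h := hX'.2.2.1 b (Or.inl hbT)
      rwa [hTT] at h
    · have ha'lt : a'.2 < a'.1 := arc_lt hw (hX'.1 a' (Or.inr rfl))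
      have hend : ∀ p : ℤ, OverarcOfVertex b p → ¬ IsEndpoint p a' := by
        intro p hp hpe
        have hne : a' ≠ b := fun hh => ha'T (by rw [hh]; exact hbT)
        rcases tri' hw hX' (Or.inr rfl) (Or.inl hbT) hne with h | h | h | h <;>
          unfold OverarcOf OverarcOfVertex IsEndpoint at * <;> omega
      rw [← lemB hno hend]
      exact hX'.2.2.1 b (Or.inl hbT)
  rw [hk] at hA
  have := (Nat.cast_inj (R := ℕ∞)).mp hA
  omega


/-- mutation preserves the number of outer-isolated vertices of a
combinatorial `w`-Hom configuration. -/
theorem stmt_8 (w : ℤ) (hw : w ≤ -1) (S : Set Arc) (hS : IsHomConfig w S)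
    (s : Arc) (hs : s ∈ S) (t : Arc) (ht : IsReplacement w S s t) :
    {p : ℤ | OuterIsolated ((S \ {s}) ∪ {t}) p}.encard
      = {p : ℤ | OuterIsolated S p}.encard := by
  classical
  obtain ⟨hts, hX'⟩ := ht
  set T := S \ {s} with hTdef
  have hST : T ∪ {s} = S := Set.diff_union_of_subset (Set.singleton_subset_iff.2 hs)
  have hsT : s ∉ T := fun h => h.2 rfl
  have hX : IsHomConfig w (T ∪ {s}) := by rw [hST]; exact hS
  have htT : t ∉ T := by
    intro htT'
    have hTT : T ∪ {t} = T :=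
      Set.union_eq_self_of_subset_right (Set.singleton_subset_iff.2 htT')
    have hXT : IsHomConfig w T := by rwa [hTT] at hX'
    by_cases hover : ∃ b ∈ T, OverarcOf b s
    · obtain ⟨b, hbT, hb, hinner⟩ := exists_innermost hover
      have hA := lemA hw hX hsT hbT hb hinner
      have hk := hXT.2.2.1 b hbT
      rw [hk] at hA
      have := (Nat.cast_inj (R := ℕ∞)).mp hA
      omega
    · push_neg at hover
      have hD := lemD hw hX hsT hover
      have hle := hXT.2.2.2
      rw [hD] at hle
      have h2 : (((2 + (-w-1).toNat : ℕ)) : ℕ∞) ≤ (((-w).toNat : ℕ) : ℕ∞) :=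
        le_trans le_add_self hle
      have := (Nat.cast_le (α := ℕ∞)).mp h2
      omega
  rw [← hST]
  by_cases hover : ∃ b ∈ T, OverarcOf b s
  · obtain ⟨b, hbT, hb, hinner⟩ := exists_innermost hover
    have hbt : OverarcOf b t := lemC hw hX hX' hsT hbT hb hinner
    rw [lemE hbT hbt, lemE hbT hb]
  · push_neg at hover
    have hovert : ∀ b ∈ T, ¬ OverarcOf b t := by
      intro b hbT hb
      obtain ⟨b', hb'T, hb', hinner'⟩ := exists_innermost ⟨b, hbT, hb⟩
      exact hover b' hb'T (lemC hw hX' hX htT hb'T hb' hinner')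
    have hD := lemD hw hX hsT hover
    have hD' := lemD hw hX' htT hovert
    rw [hD'] at hD
    have hc : (((2 + (-w-1).toNat : ℕ)) : ℕ∞) ≠ ⊤ := by
      exact_mod_cast WithTop.coe_ne_top
    exact WithTop.add_right_cancel hc hD
end

section
/- Let w ≤ -1 be an integer and d := w - 1. Let X be a set of d-admissible arcs and let v be an outer-isolated vertex of X. Then v is an isolated vertex of the Ptolemy closure of X; moreover the Ptolemy closure of X contains no arc (t,u) with u < v < t, and hence equals the union of the Ptolemy closure of X₁ := {arcs of X both of whose endpoints are greater than v} and the Ptolemy closure of X₂ := {arcs of X both of whose endpoints are less than v}. -/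
open Set

lemma subset_closure' (w : ℤ) (X : Set Arc) : X ⊆ PtolemyClosure w X :=
  fun a ha => mem_sInter.2 fun _ hY => hY.1 ha

lemma closure_subset' (w : ℤ) (X Y : Set Arc) (h1 : X ⊆ Y) (h2 : PtolemyClosed w Y) :
    PtolemyClosure w X ⊆ Y :=
  sInter_subset_of_mem ⟨h1, h2⟩

lemma good_closed (w : ℤ) (P : ℤ → Prop) :
    PtolemyClosed w {a : Arc | IsAdmissible w a ∧ P a.1 ∧ P a.2} := by
  constructor
  · exact fun a ha => ha.1
  · rintro a ⟨_, ha1, ha2⟩ b ⟨_, hb1, hb2⟩ c hpt hc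
    refine ⟨hc, ?_⟩
    rcases hpt with ⟨_, _, (⟨h1, h2⟩ | ⟨h1, h2⟩)⟩ | ⟨_, p, e, f, h, hc'⟩
    · rcases h1 with h1 | h1 <;> rcases h2 with h2 | h2 <;> rw [h1, h2] <;> exact ⟨by assumption, by assumption⟩
    · rcases h1 with h1 | h1 <;> rcases h2 with h2 | h2 <;> rw [h1, h2] <;> exact ⟨by assumption, by assumption⟩
    · have he : P e ∧ P f := by
        rcases h with ⟨_, ⟨he, _⟩, ⟨hf, _⟩⟩ | ⟨_, ⟨he, _⟩, ⟨hf, _⟩⟩ <;>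
          rcases he with he | he <;> rcases hf with hf | hf <;> rw [he, hf] <;>
          exact ⟨by assumption, by assumption⟩
      rw [hc']
      constructor
      · rcases max_choice e f with h | h <;> rw [h] <;> [exact he.1; exact he.2]
      · rcases min_choice e f with h | h <;> rw [h] <;> [exact he.1; exact he.2]

lemma no_mixed (v : ℤ) (a b : Arc) (ha1 : v < a.1) (ha2 : v < a.2)
    (hb1 : b.1 < v) (hb2 : b.2 < v) (c : Arc) :
    ¬ (IsPtolemyI a b c ∨ IsPtolemyII a b c) := by
  rintro (⟨hsc, -, -⟩ | ⟨-, p, e, f, (⟨⟨hp, hq⟩, -, -⟩ | ⟨⟨hp, hq⟩, -, -⟩), -⟩)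
  · rcases hsc with ⟨h1, h2, h3⟩ | ⟨h1, h2, h3⟩ <;> omega
  · rcases hp with hp | hp <;> rcases hq with hq | hq <;> omega
  · rcases hp with hp | hp <;> rcases hq with hq | hq <;> omega

lemma no_mixed' (v : ℤ) (a b : Arc) (ha1 : a.1 < v) (ha2 : a.2 < v)
    (hb1 : v < b.1) (hb2 : v < b.2) (c : Arc) :
    ¬ (IsPtolemyI a b c ∨ IsPtolemyII a b c) := by
  rintro (⟨hsc, -, -⟩ | ⟨-, p, e, f, (⟨⟨hp, hq⟩, -, -⟩ | ⟨⟨hp, hq⟩, -, -⟩), -⟩)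
  · rcases hsc with ⟨h1, h2, h3⟩ | ⟨h1, h2, h3⟩ <;> omega
  · rcases hp with hp | hp <;> rcases hq with hq | hq <;> omega
  · rcases hp with hp | hp <;> rcases hq with hq | hq <;> omega

lemma closed_closure (w : ℤ) (X : Set Arc) (hadm : ∀ a ∈ X, IsAdmissible w a) :
    PtolemyClosed w (PtolemyClosure w X) := by
  have hA : PtolemyClosure w X ⊆ {a : Arc | IsAdmissible w a} := by
    apply closure_subset' w X _ (fun a ha => hadm a ha)
    exact ⟨fun a ha => ha, fun a _ b _ c _ hc => hc⟩
  refine ⟨fun a ha => hA ha, ?_⟩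
  intro a ha b hb c hpt hc
  exact mem_sInter.2 fun Y hY =>
    hY.2.2 a (mem_sInter.1 ha Y hY) b (mem_sInter.1 hb Y hY) c hpt hc

/-- an outer-isolated vertex `v` of a set `X` of `d`-admissible arcs is an
isolated vertex of the Ptolemy closure of `X`; the Ptolemy closure contains no arc over
`v`, and equals the union of the Ptolemy closures of the parts of `X` to the right and to
the left of `v`. -/
theorem stmt_12 (w : ℤ) (hw : w ≤ -1) (X : Set Arc)
    (hadm : ∀ a ∈ X, IsAdmissible w a) (v : ℤ) (hv : OuterIsolated X v) :
    Isolated (PtolemyClosure w X) v ∧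
    (∀ a ∈ PtolemyClosure w X, ¬ (a.2 < v ∧ v < a.1)) ∧
    PtolemyClosure w X =
      PtolemyClosure w {a ∈ X | v < a.1 ∧ v < a.2} ∪
        PtolemyClosure w {a ∈ X | a.1 < v ∧ a.2 < v} := by
  set X1 := {a ∈ X | v < a.1 ∧ v < a.2} with hX1
  set X2 := {a ∈ X | a.1 < v ∧ a.2 < v} with hX2
  have hadm1 : ∀ a ∈ X1, IsAdmissible w a := fun a ha => hadm a ha.1
  have hadm2 : ∀ a ∈ X2, IsAdmissible w a := fun a ha => hadm a ha.1
  have key1 : PtolemyClosure w X1 ⊆ {a : Arc | IsAdmissible w a ∧ v < a.1 ∧ v < a.2} :=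
    closure_subset' w _ _ (fun a ha => ⟨hadm a ha.1, ha.2⟩) (good_closed w (v < ·))
  have key2 : PtolemyClosure w X2 ⊆ {a : Arc | IsAdmissible w a ∧ a.1 < v ∧ a.2 < v} :=
    closure_subset' w _ _ (fun a ha => ⟨hadm a ha.1, ha.2⟩) (good_closed w (· < v))
  set Z := PtolemyClosure w X1 ∪ PtolemyClosure w X2 with hZ
  have hXZ : X ⊆ Z := by
    intro a ha
    have h1 : a.2 < a.1 := by have := (hadm a ha).1; omega
    have h2 : ¬ IsEndpoint v a := hv.1 a ha
    have h3 : ¬ (a.2 < v ∧ v < a.1) := hv.2 a ha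
    simp only [IsEndpoint, not_or] at h2
    rcases lt_trichotomy v a.2 with h | h | h
    · exact Or.inl (subset_closure' w X1 ⟨ha, by omega, h⟩)
    · exact absurd h h2.2
    · exact Or.inr (subset_closure' w X2 ⟨ha, by omega, h⟩)
  have hZclosed : PtolemyClosed w Z := by
    constructor
    · rintro a (ha | ha)
      · exact (key1 ha).1
      · exact (key2 ha).1
    · rintro a (ha | ha) b (hb | hb) c hpt hc
      · exact Or.inl ((closed_closure w X1 hadm1).2 a ha b hb c hpt hc)
      · exact absurd hpt (no_mixed v a b (key1 ha).2.1 (key1 ha).2.2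
          (key2 hb).2.1 (key2 hb).2.2 c)
      · exact absurd hpt (no_mixed' v a b (key2 ha).2.1 (key2 ha).2.2
          (key1 hb).2.1 (key1 hb).2.2 c)
      · exact Or.inr ((closed_closure w X2 hadm2).2 a ha b hb c hpt hc)
  have heq : PtolemyClosure w X = Z := by
    apply Set.Subset.antisymm
    · exact closure_subset' w X Z hXZ hZclosed
    · apply Set.union_subset
      · exact closure_subset' w X1 _ (fun a ha => subset_closure' w X (ha.1)) (closed_closure w X hadm)
      · exact closure_subset' w X2 _ (fun a ha => subset_closure' w X (ha.1)) (closed_closure w X hadm)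
  refine ⟨?_, ?_, heq⟩
  · intro a ha hep
    rw [heq] at ha
    rcases ha with ha | ha
    · rcases hep with h | h
      · exact absurd ((key1 ha).2.1) (by omega)
      · exact absurd ((key1 ha).2.2) (by omega)
    · rcases hep with h | h
      · exact absurd ((key2 ha).2.1) (by omega)
      · exact absurd ((key2 ha).2.2) (by omega)
  · intro a ha hover
    rw [heq] at ha
    rcases ha with ha | ha
    · exact absurd (key1 ha).2.2 (by omega)
    · exact absurd (key2 ha).2.1 (by omega)
end

section
/- Let w ≤ -1 be an integer and d := w - 1. Let S be a set of pairwise noncrossing d-admissible arcs and let α ∈ S be an outer-arc of S. Set X_S := { (t + j, u + j) : (t,u) ∈ S, 0 ≤ j ≤ |w| - 1 }. Then the Ptolemy closure of X_S contains no arc whose target equals s(α); moreover it contains no arc σ which is an overarc of the integer s(α) such that the arc (s(σ), s(α)) is d-admissible. -/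
open Set

/-- The key invariant: if the source of `c` lies strictly above `P` and is congruent to
`P - 1` modulo `d = w - 1`, then the target of `c` lies strictly above `P`. -/
def GoodArc (w P : ℤ) (c : Arc) : Prop :=
  P < c.1 → (w - 1) ∣ (P - c.1 - 1) → P < c.2

lemma dvd_bound {w x : ℤ} (h : (w - 1) ∣ x) (h0 : 0 < x) : 1 - w ≤ x := by
  have h' : (1 - w) ∣ x := by
    rw [show (1 : ℤ) - w = -(w - 1) by ring]
    exact (neg_dvd).mpr h
  exact Int.le_of_dvd h0 h'

lemma lt_of_le_dvd {w P x : ℤ} (hw : w ≤ -1) (h : (w - 1) ∣ (P - x - 1)) (hx : P ≤ x) :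
    P < x := by
  rcases lt_or_eq_of_le hx with h' | h'
  · exact h'
  · exfalso
    obtain ⟨k, ek⟩ := h
    have h1 : (w - 1) ∣ (1 : ℤ) := ⟨-k, by linear_combination -ek + h'⟩
    have := dvd_bound h1 one_pos
    omega

lemma classI_half {w P : ℤ} (hw : w ≤ -1) {a b c : Arc}
    (hadmb : IsAdmissible w b) (hGa : GoodArc w P a) (hGb : GoodArc w P b)
    (hcross : StrictCross a b) (h1 : IsEndpoint c.1 a) (h2 : IsEndpoint c.2 b)
    (hadmc : IsAdmissible w c) : GoodArc w P c := by
  intro hP hdvd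
  by_contra hle
  push_neg at hle
  obtain ⟨kb, ekb⟩ := hadmb.2
  obtain ⟨kc, ekc⟩ := hadmc.2
  obtain ⟨kd, ekd⟩ := hdvd
  rcases hcross with ⟨p1, p2, p3⟩ | ⟨p1, p2, p3⟩
  · -- a.2 < b.2 < a.1 < b.1
    rcases h2 with h2 | h2
    · rcases h1 with h1 | h1 <;> omega
    · rcases h1 with h1 | h1
      · have ha2 : P < a.2 :=
          hGa (by omega) ⟨kd, by linear_combination ekd + h1⟩
        omega
      · omega
  · -- b.2 < a.2 < b.1 < a.1
    rcases h2 with h2 | h2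
    · rcases h1 with h1 | h1
      · have ha2 : P < a.2 :=
          hGa (by omega) ⟨kd, by linear_combination ekd + h1⟩
        omega
      · omega
    · -- c.2 = b.2
      have hb1P : P < b.1 := by
        rcases h1 with h1 | h1
        · have ha2 : P < a.2 :=
            hGa (by omega) ⟨kd, by linear_combination ekd + h1⟩
          omega
        · omega
      have hdb : (w - 1) ∣ (P - b.1 - 1) :=
        ⟨kd - kc + kb, by linear_combination ekd - ekc + ekb + h2⟩
      have := hGb hb1P hdb
      omega

lemma classII_half {w P : ℤ} (hw : w ≤ -1) {a b : Arc} {p e f : ℤ}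
    (hadma : IsAdmissible w a) (hadmb : IsAdmissible w b)
    (hGa : GoodArc w P a) (hGb : GoodArc w P b)
    (hpa : IsEndpoint p a) (hp1b : IsEndpoint (p - 1) b)
    (hea : IsEndpoint e a) (hep : e ≠ p)
    (hfb : IsEndpoint f b) (hfp : f ≠ p - 1)
    (hadmc : IsAdmissible w (max e f, min e f)) :
    GoodArc w P (max e f, min e f) := by
  intro hP hdvd
  have hP' : P < max e f := hP
  have hdvd' : (w - 1) ∣ (P - max e f - 1) := hdvd
  show P < min e f
  by_contra hle
  push_neg at hle
  have haord : a.2 - a.1 ≤ w := hadma.1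
  have hbord : b.2 - b.1 ≤ w := hadmb.1
  have hcord : min e f - max e f ≤ w := hadmc.1
  obtain ⟨ka, eka⟩ := hadma.2
  obtain ⟨kb, ekb⟩ := hadmb.2
  have hc2 : (w - 1) ∣ (min e f - max e f - 1) := hadmc.2
  rcases lt_trichotomy e f with hlt | heq | hlt
  · -- e < f : source of c is f (endpoint of b), target is e (endpoint of a)
    rw [max_eq_right hlt.le] at hP' hdvd'
    rw [min_eq_left hlt.le, max_eq_right hlt.le] at hc2
    obtain ⟨kc, ekc⟩ := hc2
    obtain ⟨kd, ekd⟩ := hdvd'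
    have hlee : e ≤ P := by
      have : min e f = e := min_eq_left hlt.le
      omega
    -- show P < p - 1
    have hpP : P < p - 1 := by
      rcases hfb with hf | hf
      · -- f = b.1
        have hp1 : p - 1 = b.2 := by
          rcases hp1b with h | h
          · exact absurd (h.trans hf.symm).symm hfp
          · exact h
        have hb2 : P < b.2 :=
          hGb (by omega) ⟨kd, by linear_combination ekd + hf⟩
        omega
      · -- f = b.2
        have hp1 : p - 1 = b.1 := by
          rcases hp1b with h | h
          · exact h
          · exact absurd (h.trans hf.symm).symm hfp
        omega
    -- a has endpoints p (source) and e (target)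
    have hpa1 : p = a.1 := by
      rcases hpa with h | h
      · exact h
      · exfalso
        rcases hea with h' | h'
        · omega
        · exact hep (h'.trans h.symm)
    have hea2 : e = a.2 := by
      rcases hea with h' | h'
      · exact absurd (h'.trans hpa1.symm) hep
      · exact h'
    have hda : (w - 1) ∣ (P - a.1 - 1) :=
      ⟨kd - kc + ka, by linear_combination ekd - ekc + eka + hea2⟩
    have := hGa (by omega) hda
    omega
  · -- e = f impossible: target = source
    rw [heq] at hcord
    simp at hcord
    omega
  · -- f < e : source of c is e (endpoint of a), target is f (endpoint of b)
    rw [max_eq_left hlt.le] at hP' hdvd'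
    rw [min_eq_right hlt.le, max_eq_left hlt.le] at hc2
    obtain ⟨kc, ekc⟩ := hc2
    obtain ⟨kd, ekd⟩ := hdvd'
    have hlef : f ≤ P := by
      have : min e f = f := min_eq_right hlt.le
      omega
    -- show P < p
    have hpP : P < p := by
      rcases hea with h | h
      · -- e = a.1
        have hpa2 : p = a.2 := by
          rcases hpa with h' | h'
          · exact absurd (h.trans h'.symm) hep
          · exact h'
        have := hGa (by omega) ⟨kd, by linear_combination ekd + h⟩
        omega
      · -- e = a.2
        have hpa1 : p = a.1 := by
          rcases hpa with h' | h'
          · exact h'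
          · exact absurd (h.trans h'.symm) hep
        omega
    -- b has endpoints p - 1 (source) and f (target)
    have hfb2 : f = b.2 := by
      rcases hfb with h | h
      · exfalso
        have hp1 : p - 1 = b.2 := by
          rcases hp1b with h' | h'
          · exact absurd (h'.trans h.symm).symm hfp
          · exact h'
        omega
      · exact h
    have hp1b1 : p - 1 = b.1 := by
      rcases hp1b with h' | h'
      · exact h'
      · exfalso
        exact hfp (hfb2.trans h'.symm)
    have hdb : (w - 1) ∣ (P - b.1 - 1) :=
      ⟨kd - kc + kb, by linear_combination ekd - ekc + ekb + hfb2⟩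
    have hb1P : P < b.1 := lt_of_le_dvd hw hdb (by omega)
    have := hGb hb1P hdb
    omega

/-- if `α` is an outer-arc of a set `S` of pairwise noncrossing
`d`-admissible arcs, then the Ptolemy closure of `X_S` contains no arc with target `s(α)`
and no overarc `σ` of the vertex `s(α)` such that `(s(σ), s(α))` is `d`-admissible. -/
theorem stmt_13 (w : ℤ) (hw : w ≤ -1) (S : Set Arc)
    (hadm : ∀ a ∈ S, IsAdmissible w a)
    (hnc : ∀ a ∈ S, ∀ b ∈ S, a ≠ b → ¬ Cross a b)
    (α : Arc) (hα : α ∈ S) (houter : ∀ b ∈ S, ¬ OverarcOf b α) :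
    ∀ σ ∈ PtolemyClosure w (ShiftFamily w S),
      σ.2 ≠ α.1 ∧ ¬ (OverarcOfVertex σ α.1 ∧ IsAdmissible w (σ.1, α.1)) := by
  intro σ hσ
  -- the invariant set
  have hY : σ ∈ {c : Arc | IsAdmissible w c ∧ GoodArc w α.1 c} := by
    refine hσ _ ⟨?_, ?_, ?_⟩
    · -- ShiftFamily ⊆ Y
      rintro c ⟨β, hβ, j, hj0, hj1, rfl⟩
      obtain ⟨hβ1, hβ2⟩ := hadm β hβ
      obtain ⟨k, ek⟩ := hβ2
      refine ⟨⟨by simpa using hβ1, ⟨k, by linear_combination ek⟩⟩, ?_⟩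
      intro hP hdvd
      simp only at hP hdvd ⊢
      by_contra hle
      push_neg at hle
      by_cases hβα : β = α
      · subst hβα
        obtain ⟨k', ek'⟩ := hdvd
        have hd : (w - 1) ∣ (j + 1) := ⟨-k', by linear_combination -ek'⟩
        have := dvd_bound hd (by omega)
        omega
      · have hcross := hnc β hβ α hα hβα
        have hover := houter β hβ
        have hne : ¬ SharesEndpoint β α := fun h => hcross (Or.inl h)
        have hnsc : ¬ StrictCross β α := fun h => hcross (Or.inr h)
        have hQP : α.2 - α.1 ≤ w := (hadm α hα).1
        simp only [SharesEndpoint, StrictCross, OverarcOf, not_or] at hne hnsc hover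
        have hb2 : β.2 < α.1 := by omega
        have hb1 : β.1 < α.1 := by omega
        obtain ⟨k', ek'⟩ := hdvd
        have hd : (w - 1) ∣ (β.1 + j + 1 - α.1) := ⟨-k', by linear_combination -ek'⟩
        have := dvd_bound hd (by omega)
        omega
    · exact fun a ha => ha.1
    · rintro a ha b hb c (⟨hcross, hord, hend⟩ | ⟨hncr, p, e, f, hbig, hceq⟩) hadmc
      · refine ⟨hadmc, ?_⟩
        rcases hend with ⟨h1, h2⟩ | ⟨h1, h2⟩
        · exact classI_half hw hb.1 ha.2 hb.2 hcross h1 h2 hadmc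
        · exact classI_half hw ha.1 hb.2 ha.2 hcross.symm h1 h2 hadmc
      · subst hceq
        refine ⟨hadmc, ?_⟩
        rcases hbig with ⟨⟨hpa, hp1b⟩, ⟨hea, hep⟩, ⟨hfb, hfp⟩⟩ |
            ⟨⟨hpb, hp1a⟩, ⟨heb, hep⟩, ⟨hfa, hfp⟩⟩
        · exact classII_half hw ha.1 hb.1 ha.2 hb.2 hpa hp1b hea hep hfb hfp hadmc
        · exact classII_half hw hb.1 ha.1 hb.2 ha.2 hpb hp1a heb hep hfa hfp hadmc
  obtain ⟨hadmσ, hGσ⟩ := hY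
  have hσ1 : σ.2 - σ.1 ≤ w := hadmσ.1
  constructor
  · intro h
    have h1 : α.1 < σ.1 := by omega
    have h2 : (w - 1) ∣ (α.1 - σ.1 - 1) := by rw [← h]; exact hadmσ.2
    have := hGσ h1 h2
    omega
  · rintro ⟨⟨hov1, hov2⟩, hadm'⟩
    have h2 : (w - 1) ∣ (α.1 - σ.1 - 1) := hadm'.2
    have := hGσ hov2 h2
    omega
end

section
/- Let w ≤ -1 be an integer and d := w - 1. Let S be a nonempty set of pairwise noncrossing d-admissible arcs such that every arc of S has exactly |w| - 1 inner-isolated vertices and every arc of S has an overarc in S. Set X_S := { (t + j, u + j) : (t,u) ∈ S, 0 ≤ j ≤ |w| - 1 }. Then for every integer x, the minimal-length arc (x, x + w) belongs to the Ptolemy closure of X_S. -/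
open Set

namespace Stmt14Aux

variable {w : ℤ} {Y : Set Arc}

lemma shrinkL (hw : w ≤ -1) (hcl : PtolemyClosed w Y) {P Q : ℤ}
    (hY : ((P, Q) : Arc) ∈ Y) (hdvd : ∃ t : ℤ, Q - P - 1 = (w - 1) * t)
    (hlen : Q + 1 - 2 * w ≤ P)
    (hm : ((Q + 1 - w, Q + 1) : Arc) ∈ Y) : ((P, Q + 1 - w) : Arc) ∈ Y := by
  obtain ⟨t, ht⟩ := hdvd
  apply hcl.2 (P, Q) hY (Q + 1 - w, Q + 1) hm (P, Q + 1 - w)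
  · right
    refine ⟨?_, Q + 1, Q + 1 - w, P, ?_, ?_⟩
    · rintro (h | h)
      · simp only [SharesEndpoint] at h; omega
      · simp only [StrictCross] at h; omega
    · refine Or.inr ⟨⟨Or.inr rfl, Or.inr (show Q + 1 - 1 = Q by ring)⟩,
        ⟨Or.inl rfl, by omega⟩, Or.inl rfl, by omega⟩
    · have h1 : max (Q + 1 - w) P = P := max_eq_right (by omega)
      have h2 : min (Q + 1 - w) P = Q + 1 - w := min_eq_left (by omega)
      rw [h1, h2]
  · exact ⟨by show Q + 1 - w - P ≤ w; omega,
      ⟨t - 1, by show Q + 1 - w - P - 1 = (w - 1) * (t - 1); linear_combination ht⟩⟩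

lemma shrinkR (hw : w ≤ -1) (hcl : PtolemyClosed w Y) {P Q : ℤ}
    (hY : ((P, Q) : Arc) ∈ Y) (hdvd : ∃ t : ℤ, Q - P - 1 = (w - 1) * t)
    (hlen : Q + 1 - 2 * w ≤ P)
    (hm : ((P - 1, P + w - 1) : Arc) ∈ Y) : ((P + w - 1, Q) : Arc) ∈ Y := by
  obtain ⟨t, ht⟩ := hdvd
  apply hcl.2 (P, Q) hY (P - 1, P + w - 1) hm (P + w - 1, Q)
  · right
    refine ⟨?_, P, Q, P + w - 1, ?_, ?_⟩
    · rintro (h | h)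
      · simp only [SharesEndpoint] at h; omega
      · simp only [StrictCross] at h; omega
    · refine Or.inl ⟨⟨Or.inl rfl, Or.inl (show P - 1 = P - 1 by ring)⟩,
        ⟨Or.inr rfl, by omega⟩, Or.inr rfl, by omega⟩
    · have h1 : max Q (P + w - 1) = P + w - 1 := max_eq_right (by omega)
      have h2 : min Q (P + w - 1) = Q := min_eq_left (by omega)
      rw [h1, h2]
  · exact ⟨by show Q - (P + w - 1) ≤ w; omega,
      ⟨t - 1, by show Q - (P + w - 1) - 1 = (w - 1) * (t - 1); linear_combination ht⟩⟩


variable {S : Set Arc}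

/-- Structure lemma: at a position `q` under `c` which is not strictly covered by any
arc nested under `c`, the position is congruent to `c.2` plus the number of
inner-isolated vertices of `c` up to `q`, modulo `1 - w`. -/
lemma struct (hw : w ≤ -1) (hadm : ∀ a ∈ S, IsAdmissible w a)
    (hnc : ∀ a ∈ S, ∀ b ∈ S, a ≠ b → ¬ Cross a b)
    {v u : ℤ} (hc : ((v, u) : Arc) ∈ S) :
    ∀ N : ℕ, ∀ q : ℤ, (q - u).toNat ≤ N → u ≤ q → q < v →
      (¬ ∃ e ∈ S, OverarcOf (v, u) e ∧ e.2 ≤ q ∧ q < e.1) →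
      ∃ t : ℤ, q - u - (({p : ℤ | InnerIsolatedOf S (v, u) p} ∩ Icc (u + 1) q).ncard : ℤ)
        = (1 - w) * t := by
  intro N
  induction N with
  | zero =>
    intro q hN h1 h2 _
    have hq : q = u := by omega
    rw [show Icc (u + 1) q = (∅ : Set ℤ) from Icc_eq_empty (by omega), inter_empty,
      Set.ncard_empty]
    exact ⟨0, by push_cast; omega⟩
  | succ N ih =>
    intro q hN h1 h2 hGood
    rcases eq_or_lt_of_le h1 with heq | hqu
    · rw [show Icc (u + 1) q = (∅ : Set ℤ) from Icc_eq_empty (by omega), inter_empty,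
        Set.ncard_empty]
      exact ⟨0, by push_cast; omega⟩
    · by_cases hqA : q ∈ {p : ℤ | InnerIsolatedOf S ((v, u) : Arc) p}
      · -- q is inner-isolated: step down by one
        have hng : ¬ ∃ e ∈ S, OverarcOf (v, u) e ∧ e.2 ≤ q - 1 ∧ q - 1 < e.1 := by
          rintro ⟨e, heS, hov, k1, k2⟩
          rcases eq_or_lt_of_le (show q ≤ e.1 by omega) with heq' | hlt'
          · exact hqA.1 e heS (Or.inl heq')
          · exact hqA.2.2 e heS hov ⟨by omega, hlt'⟩
        obtain ⟨t, ht⟩ := ih (q - 1) (by omega) (by omega) (by omega) hng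
        have hstep : ({p : ℤ | InnerIsolatedOf S ((v, u) : Arc) p} ∩ Icc (u + 1) q)
            = insert q ({p : ℤ | InnerIsolatedOf S ((v, u) : Arc) p} ∩ Icc (u + 1) (q - 1)) := by
          ext x
          simp only [mem_inter_iff, mem_Icc, mem_insert_iff, mem_setOf_eq]
          constructor
          · rintro ⟨hx1, hx2, hx3⟩
            rcases eq_or_lt_of_le hx3 with h | h
            · exact Or.inl h
            · exact Or.inr ⟨hx1, hx2, by omega⟩
          · rintro (rfl | ⟨hx1, hx2, hx3⟩)
            · exact ⟨hqA, by omega, le_refl _⟩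
            · exact ⟨hx1, hx2, by omega⟩
        have hqnot : q ∉ ({p : ℤ | InnerIsolatedOf S ((v, u) : Arc) p} ∩ Icc (u + 1) (q - 1)) := by
          rintro ⟨-, -, h⟩; omega
        rw [hstep, Set.ncard_insert_of_notMem hqnot ((finite_Icc _ _).inter_of_right _)]
        exact ⟨t, by push_cast; linear_combination ht⟩
      · by_cases hiso : Isolated S q
        · exfalso
          refine hqA ⟨hiso, ⟨hqu, h2⟩, ?_⟩
          intro e heS hov hove
          exact hGood ⟨e, heS, hov, le_of_lt hove.1, hove.2⟩
        · have hex : ∃ e ∈ S, IsEndpoint q e := by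
            unfold Isolated at hiso; push_neg at hiso; exact hiso
          obtain ⟨e, heS, hqe⟩ := hex
          obtain ⟨e1, e2⟩ := e
          have hadm_e : e2 - e1 ≤ w := (hadm _ heS).1
          simp only [IsEndpoint] at hqe
          have hne : ((e1, e2) : Arc) ≠ (v, u) := by
            rintro h
            rw [Prod.mk.injEq] at h
            omega
          have hncr := hnc _ hc _ heS (Ne.symm hne)
          simp only [Cross, SharesEndpoint, StrictCross, not_or] at hncr
          have hq1 : q = e1 := by
            rcases hqe with h' | h'
            · exact h'
            · exfalso
              refine hGood ⟨(e1, e2), heS, ⟨?_, ?_, ?_⟩, ?_, ?_⟩ <;> (try dsimp only) <;> omega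
          subst hq1
          -- now q = q : q is the right endpoint of nested arc (q, e2)
          have hu2 : u < e2 := by omega
          have he2v : q < v := h2
          have hng : ¬ ∃ e' ∈ S, OverarcOf (v, u) e' ∧ e'.2 ≤ e2 - 1 ∧ e2 - 1 < e'.1 := by
            rintro ⟨e', he'S, hov', k1, k2⟩
            obtain ⟨f1, f2⟩ := e'
            (try dsimp only at k1 k2)
            obtain ⟨ho1, ho2, ho3⟩ := hov'
            (try dsimp only at ho1 ho2 ho3)
            have hne' : ((f1, f2) : Arc) ≠ (q, e2) := by
              rintro h; rw [Prod.mk.injEq] at h; omega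
            have hncr2 := hnc _ he'S _ heS hne'
            simp only [Cross, SharesEndpoint, StrictCross, not_or] at hncr2
            have hf1 : q < f1 := by omega
            exact hGood ⟨(f1, f2), he'S, ⟨by (try dsimp only); omega, by (try dsimp only); omega,
              by (try dsimp only); omega⟩, by (try dsimp only); omega, by (try dsimp only); omega⟩
          obtain ⟨t, ht⟩ := ih (e2 - 1) (by omega) (by omega) (by omega) hng
          have hγeq : ({p : ℤ | InnerIsolatedOf S ((v, u) : Arc) p} ∩ Icc (u + 1) q)
              = ({p : ℤ | InnerIsolatedOf S ((v, u) : Arc) p} ∩ Icc (u + 1) (e2 - 1)) := by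
            ext x
            simp only [mem_inter_iff, mem_setOf_eq, mem_Icc]
            constructor
            · rintro ⟨hxA, hx1, hx2⟩
              refine ⟨hxA, hx1, ?_⟩
              by_contra hcon
              push_neg at hcon
              rcases eq_or_lt_of_le (show e2 ≤ x by omega) with h' | h'
              · exact hxA.1 (q, e2) heS (Or.inr h'.symm)
              · rcases eq_or_lt_of_le hx2 with h'' | h''
                · exact hxA.1 (q, e2) heS (Or.inl h'')
                · exact hxA.2.2 (q, e2) heS ⟨hu2, by (try dsimp only); omega, by (try dsimp only); omega⟩
                    ⟨h', h''⟩
            · rintro ⟨hxA, hx1, hx2⟩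
              exact ⟨hxA, hx1, by omega⟩
          rw [hγeq]
          obtain ⟨t2, ht2⟩ := (hadm _ heS).2
          (try dsimp only at ht2)
          exact ⟨t + t2, by linear_combination ht - ht2⟩


lemma icc_ncard (a b : ℤ) : (Set.Icc a b).ncard = (b + 1 - a).toNat := by
  rw [← Finset.coe_Icc, Set.ncard_coe_finset, Int.card_Icc]

/-- Main lemma: for every arc `c` of `S` and every position `p` under `c`
(including its source but not its target), the minimal arc `(p - w, p)`
belongs to any Ptolemy closed set containing the shift family. -/
lemma main (hw : w ≤ -1)
    (hadm : ∀ a ∈ S, IsAdmissible w a)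
    (hnc : ∀ a ∈ S, ∀ b ∈ S, a ≠ b → ¬ Cross a b)
    (hinner : ∀ a ∈ S, {p : ℤ | InnerIsolatedOf S a p}.encard = ((-w - 1).toNat : ℕ∞))
    (hXY : ShiftFamily w S ⊆ Y) (hcl : PtolemyClosed w Y) :
    ∀ n : ℕ, ∀ c, c ∈ S → (c.1 - c.2).toNat ≤ n → ∀ p : ℤ, c.2 ≤ p → p < c.1 →
      ((p - w, p) : Arc) ∈ Y := by
  intro n
  induction n with
  | zero =>
    intro c hc hn p h1 h2
    exfalso
    have := (hadm c hc).1
    omega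
  | succ n ih =>
    rintro ⟨v, u⟩ hc hn p hp1 hp2
    simp only at hn hp1 hp2
    have hadm_c := hadm _ hc
    simp only [IsAdmissible] at hadm_c
    obtain ⟨hvu1, r, hr⟩ := hadm_c
    have hAfin : ({p : ℤ | InnerIsolatedOf S ((v, u) : Arc) p}).Finite :=
      Set.finite_of_encard_eq_coe (hinner _ hc)
    have hAcard : ({p : ℤ | InnerIsolatedOf S ((v, u) : Arc) p}).ncard = (-w - 1).toNat := by
      rw [Set.ncard_def, hinner _ hc, ENat.toNat_coe]
    have hAsub : ({p : ℤ | InnerIsolatedOf S ((v, u) : Arc) p}) ⊆ Icc (u + 1) (v - 1) := by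
      intro x hx
      have ha : u < x := hx.2.1.1
      have hb : x < v := hx.2.1.2
      exact ⟨by omega, by omega⟩
    -- helper: p' positions covered by a nested arc are handled by the induction hypothesis
    have hhelp : ∀ q : ℤ, u ≤ q → q < v →
        (¬ ∃ t : ℤ, q - u -
          ((({p : ℤ | InnerIsolatedOf S ((v, u) : Arc) p} ∩ Icc (u + 1) q).ncard : ℤ))
            = (1 - w) * t) →
        ((q - w, q) : Arc) ∈ Y := by
      intro q h1 h2 h3
      have hG : ∃ e ∈ S, OverarcOf (v, u) e ∧ e.2 ≤ q ∧ q < e.1 := by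
        by_contra hng
        exact h3 (struct hw hadm hnc hc (q - u).toNat q le_rfl h1 h2 hng)
      obtain ⟨e, heS, hov, he1, he2⟩ := hG
      obtain ⟨ho1, ho2, ho3⟩ := hov
      exact ih e heS (by simp only at ho1 ho3; omega) q he1 he2
    by_cases hGood : ∃ e ∈ S, OverarcOf (v, u) e ∧ e.2 ≤ p ∧ p < e.1
    · obtain ⟨e, heS, hov, he1, he2⟩ := hGood
      obtain ⟨ho1, ho2, ho3⟩ := hov
      exact ih e heS (by simp only at ho1 ho3; omega) p he1 he2
    · -- the filling derivation
      obtain ⟨t0, ht0⟩ := struct hw hadm hnc hc (p - u).toNat p le_rfl hp1 hp2 hGood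
      set k : ℤ :=
        ((({p : ℤ | InnerIsolatedOf S ((v, u) : Arc) p} ∩ Icc (u + 1) p).ncard : ℤ)) with hkdef
      have hk0 : 0 ≤ k := by positivity
      have hk2 : k ≤ -w - 1 := by
        have h1 : ({p : ℤ | InnerIsolatedOf S ((v, u) : Arc) p} ∩ Icc (u + 1) p).ncard
            ≤ ({p : ℤ | InnerIsolatedOf S ((v, u) : Arc) p}).ncard :=
          Set.ncard_le_ncard inter_subset_left hAfin
        omega
      have hkp : u + k ≤ p := by
        have h1 : ({p : ℤ | InnerIsolatedOf S ((v, u) : Arc) p} ∩ Icc (u + 1) p).ncard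
            ≤ (Icc (u + 1) p).ncard :=
          Set.ncard_le_ncard inter_subset_right (finite_Icc _ _)
        rw [icc_ncard] at h1
        omega
      have hγmono : ∀ x y : ℤ, x ≤ y →
          (({p : ℤ | InnerIsolatedOf S ((v, u) : Arc) p} ∩ Icc (u + 1) x).ncard : ℤ)
            ≤ (({p : ℤ | InnerIsolatedOf S ((v, u) : Arc) p} ∩ Icc (u + 1) y).ncard : ℤ) := by
        intro x y hxy
        have := Set.ncard_le_ncard
          (inter_subset_inter_right {p : ℤ | InnerIsolatedOf S ((v, u) : Arc) p}
            (Icc_subset_Icc_right hxy))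
          ((finite_Icc (u+1) y).inter_of_right _)
        omega
      have hγtop : ∀ x : ℤ,
          (({p : ℤ | InnerIsolatedOf S ((v, u) : Arc) p} ∩ Icc (u + 1) x).ncard : ℤ) ≤ -w - 1 := by
        intro x
        have := Set.ncard_le_ncard
          (inter_subset_left (s := {p : ℤ | InnerIsolatedOf S ((v, u) : Arc) p})
            (t := Icc (u + 1) x)) hAfin
        omega
      have hpk_ub : p - w ≤ v + k := by
        have hsub2 : ({p : ℤ | InnerIsolatedOf S ((v, u) : Arc) p}) ⊆
            (({p : ℤ | InnerIsolatedOf S ((v, u) : Arc) p} ∩ Icc (u + 1) p) ∪ Icc (p + 1) (v - 1)) := by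
          intro z hz
          by_cases hzp : z ≤ p
          · exact Or.inl ⟨hz, (hAsub hz).1, hzp⟩
          · exact Or.inr ⟨by omega, (hAsub hz).2⟩
        have h1 := Set.ncard_le_ncard hsub2
          (((finite_Icc _ _).inter_of_right _).union (finite_Icc _ _))
        have h2 := Set.ncard_union_le
          ({p : ℤ | InnerIsolatedOf S ((v, u) : Arc) p} ∩ Icc (u + 1) p) (Icc (p + 1) (v - 1))
        rw [icc_ncard] at h2
        omega
      have hshift : ((v + k, u + k) : Arc) ∈ Y := by
        refine hXY ⟨(v, u), hc, k, hk0, hk2, ?_⟩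
        simp only
      -- left phase
      have hleft : ∀ N : ℕ, ∀ Q : ℤ, (Q - (u + k)).toNat ≤ N → u + k ≤ Q → Q ≤ p →
          (∃ t : ℤ, Q - u - k = (1 - w) * t) → ((v + k, Q) : Arc) ∈ Y := by
        intro N
        induction N with
        | zero =>
          intro Q hN h1 h2 hdv
          have hQ : Q = u + k := by omega
          rw [hQ]
          exact hshift
        | succ N ihN =>
          intro Q hN h1 h2 hdv
          rcases eq_or_lt_of_le h1 with heq | hlt
          · rw [← heq]; exact hshift
          · obtain ⟨t, ht⟩ := hdv
            have hQ2 : u + k + (1 - w) ≤ Q := by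
              have hd : (1 - w : ℤ) ∣ (Q - u - k) := ⟨t, ht⟩
              have := Int.le_of_dvd (by omega) hd
              omega
            have hrec : ((v + k, Q - (1 - w)) : Arc) ∈ Y :=
              ihN (Q - (1 - w)) (by omega) (by omega) (by omega)
                ⟨t - 1, by linear_combination ht⟩
            have hhm : ((Q - (1 - w) + 1 - w, Q - (1 - w) + 1) : Arc) ∈ Y := by
              have hq_h := hhelp (Q - (1 - w) + 1) (by omega) (by omega) ?_
              · have heq2 : Q - (1 - w) + 1 - w = (Q - (1 - w) + 1) - w := by ring
                rw [heq2]
                exact hq_h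
              · rintro ⟨s, hs⟩
                have hg1 := hγmono (Q - (1 - w) + 1) p (by omega)
                have hg0 : (0 : ℤ) ≤
                    (({p : ℤ | InnerIsolatedOf S ((v, u) : Arc) p}
                      ∩ Icc (u + 1) (Q - (1 - w) + 1)).ncard : ℤ) := by positivity
                have hdd : (1 - w : ℤ) ∣ (k + 1 -
                    (({p : ℤ | InnerIsolatedOf S ((v, u) : Arc) p}
                      ∩ Icc (u + 1) (Q - (1 - w) + 1)).ncard : ℤ)) :=
                  ⟨s - t + 1, by linear_combination hs - ht⟩
                have := Int.le_of_dvd (by omega) hdd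
                omega
            have hres := shrinkL hw hcl hrec
              ⟨r - t + 1, by linear_combination ht + hr⟩ (by omega) hhm
            have hQQ : Q - (1 - w) + 1 - w = Q := by ring
            rwa [hQQ] at hres
      -- divisibility of the full range
      have hdvd_vk : ∃ t : ℤ, v + k - p + w = (1 - w) * t :=
        ⟨r - 1 - t0, by linear_combination - ht0 - hr⟩
      -- right phase
      have hright : ∀ N : ℕ, ∀ P : ℤ, (v + k - P).toNat ≤ N → p - w ≤ P → P ≤ v + k →
          (∃ t : ℤ, P - p + w = (1 - w) * t) → ((P, p) : Arc) ∈ Y := by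
        intro N
        induction N with
        | zero =>
          intro P hN h1 h2 hdv
          have hP : P = v + k := by omega
          rw [hP]
          exact hleft (p - (u + k)).toNat p le_rfl hkp le_rfl ⟨t0, by linear_combination ht0⟩
        | succ N ihN =>
          intro P hN h1 h2 hdv
          rcases eq_or_lt_of_le h2 with heq | hlt
          · rw [heq]
            exact hleft (p - (u + k)).toNat p le_rfl hkp le_rfl ⟨t0, by linear_combination ht0⟩
          · obtain ⟨t, ht⟩ := hdv
            obtain ⟨t1, ht1⟩ := hdvd_vk
            have hP' : P + (1 - w) ≤ v + k := by
              have hd : (1 - w : ℤ) ∣ (v + k - P) := ⟨t1 - t, by linear_combination ht1 - ht⟩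
              have := Int.le_of_dvd (by omega) hd
              omega
            have hrec : ((P + (1 - w), p) : Arc) ∈ Y :=
              ihN (P + (1 - w)) (by omega) (by omega) (by omega)
                ⟨t + 1, by linear_combination ht⟩
            have hhm : ((P - w, P) : Arc) ∈ Y := by
              refine hhelp P (by omega) (by omega) ?_
              rintro ⟨s, hs⟩
              have hg1 := hγmono p P (by omega)
              have hg2 := hγtop P
              have hdd2 : (1 - w : ℤ) ∣ (k -
                  (({p : ℤ | InnerIsolatedOf S ((v, u) : Arc) p}
                    ∩ Icc (u + 1) P).ncard : ℤ) - w) :=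
                ⟨s - t - t0, by linear_combination hs - ht - ht0⟩
              have := Int.le_of_dvd (by omega) hdd2
              omega
            have hres := shrinkR hw hcl hrec
              ⟨t + 2, by linear_combination - ht⟩ (by omega) ?_
            · have hPP : P + (1 - w) + w - 1 = P := by ring
              rwa [hPP] at hres
            · have h1' : P + (1 - w) - 1 = P - w := by ring
              have h2' : P + (1 - w) + w - 1 = P := by ring
              rw [h1', h2']
              exact hhm
      have hfin := hright (v + k - (p - w)).toNat (p - w) le_rfl le_rfl hpk_ub
        ⟨0, by ring⟩
      exact hfin


lemma chain (hover : ∀ a ∈ S, ∃ b ∈ S, OverarcOf b a) :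
    ∀ c ∈ S, ∀ n : ℕ, ∃ c' ∈ S, c'.2 ≤ c.2 - n ∧ c.1 + n ≤ c'.1 := by
  intro c hc n
  induction n with
  | zero => exact ⟨c, hc, by omega, by omega⟩
  | succ n ihn =>
    obtain ⟨c', hc', h1, h2⟩ := ihn
    obtain ⟨b, hb, hov⟩ := hover c' hc'
    obtain ⟨k1, k2, k3⟩ := hov
    exact ⟨b, hb, by push_cast; omega, by push_cast; omega⟩

end Stmt14Aux

/-- if `S` is a nonempty set of pairwise noncrossing `d`-admissible arcs in
which every arc has exactly `|w| - 1` inner-isolated vertices and every arc has an overarc,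
then every minimal-length arc `(x, x + w)` lies in the Ptolemy closure of `X_S`. -/
theorem stmt_14 (w : ℤ) (hw : w ≤ -1) (S : Set Arc) (hne : S.Nonempty)
    (hadm : ∀ a ∈ S, IsAdmissible w a)
    (hnc : ∀ a ∈ S, ∀ b ∈ S, a ≠ b → ¬ Cross a b)
    (hinner : ∀ a ∈ S, {p : ℤ | InnerIsolatedOf S a p}.encard = ((-w - 1).toNat : ℕ∞))
    (hover : ∀ a ∈ S, ∃ b ∈ S, OverarcOf b a) :
    ∀ x : ℤ, ((x, x + w) : Arc) ∈ PtolemyClosure w (ShiftFamily w S) := by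
  intro x
  rw [PtolemyClosure, Set.mem_sInter]
  rintro Y ⟨hXY, hcl⟩
  obtain ⟨c0, hc0⟩ := hne
  obtain ⟨c, hc, h1, h2⟩ := Stmt14Aux.chain hover c0 hc0
    ((c0.2 - (x + w)).toNat + (x + w + 1 - c0.1).toNat)
  have hp1 : c.2 ≤ x + w := by omega
  have hp2 : x + w < c.1 := by omega
  have := Stmt14Aux.main hw hadm hnc hinner hXY hcl (c.1 - c.2).toNat c hc le_rfl
    (x + w) hp1 hp2
  have hq : ((x + w - w, x + w) : Arc) = ((x, x + w) : Arc) := by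
    rw [Prod.mk.injEq]
    constructor
    · ring
    · rfl
  rwa [hq] at this
end

section
/- Let C be a pretriangulated category with shift functor ⟦1⟧, let w ≤ -1 be an integer, let S be a set of objects of C, and let X := { s⟦i⟧ : s ∈ S, w + 1 ≤ i ≤ 0 }. For classes of objects M, N of C set M * N := { t : there is a distinguished triangle m → t → n → m⟦1⟧ with m ∈ M and n ∈ N }, let M^⊕ denote the class of all direct summands of objects of M, and define (X)_1 := X and (X)_n := (X * (X)_{n-1})^⊕ for n ≥ 2. Assume that every object of C is a direct summand of an object belonging to (X)_n for some n ≥ 1. Then for every object t of C that is not a zero object there exist s ∈ S and an integer k with w + 1 ≤ k ≤ 0 such that Hom(t, s⟦k⟧) ≠ 0. -/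
/-!
If `Hom(t, X) = 0`, then `Hom(t, -)` vanishes on every `(X)_n`: the class of objects `y` with
`Hom(t, y) = 0` is closed under direct summands and, since `Hom(t, -)` is homologically exact
on distinguished triangles, under extensions. As `t` is a summand of some `(X)_n`, this forces
`𝟙 t = 0`.
-/

open CategoryTheory CategoryTheory.Limits CategoryTheory.Pretriangulated

universe v u

variable {C : Type u} [Category.{v} C] [HasZeroObject C] [Preadditive C]
  [HasShift C ℤ] [∀ n : ℤ, (shiftFunctor C n).Additive] [Pretriangulated C]

/-- `M * N`: the class of objects `t` fitting in a distinguished triangle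
`m → t → n → m⟦1⟧` with `m ∈ M` and `n ∈ N`. -/
def starSet (M N : Set C) : Set C :=
  {t | ∃ m ∈ M, ∃ n ∈ N, ∃ (f : m ⟶ t) (g : t ⟶ n) (h : n ⟶ m⟦(1 : ℤ)⟧),
    Triangle.mk f g h ∈ distTriang C}

/-- `M^⊕`: the class of all direct summands of objects of `M`. -/
def summandClosure (M : Set C) : Set C :=
  {t | ∃ m ∈ M, ∃ (i : t ⟶ m) (r : m ⟶ t), i ≫ r = 𝟙 t}

/-- `X = { s⟦i⟧ : s ∈ S, w + 1 ≤ i ≤ 0 }`. -/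
def shiftSet (w : ℤ) (S : Set C) : Set C :=
  {y | ∃ s ∈ S, ∃ i : ℤ, w + 1 ≤ i ∧ i ≤ 0 ∧ y = s⟦i⟧}

/-- The classes `(X)_n` (indexed here from `0`, so `layers w S (n - 1) = (X)_n`):
`(X)_1 = X` and `(X)_{n+1} = (X * (X)_n)^⊕`. -/
def layers (w : ℤ) (S : Set C) : ℕ → Set C
  | 0 => shiftSet w S
  | n + 1 => summandClosure (starSet (shiftSet w S) (layers w S n))

section HomVanishing

variable (t : C)

omit [HasZeroObject C] [HasShift C ℤ] [∀ n : ℤ, (shiftFunctor C n).Additive]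
  [Pretriangulated C] in
lemma hom_eq_zero_of_mem_summandClosure {M : Set C} (hM : ∀ m ∈ M, ∀ f : t ⟶ m, f = 0) :
    ∀ x ∈ summandClosure M, ∀ f : t ⟶ x, f = 0 := by
  rintro x ⟨m, hm, i, r, hir⟩ f
  calc f = (f ≫ i) ≫ r := by rw [Category.assoc, hir, Category.comp_id]
    _ = 0 := by rw [hM m hm (f ≫ i), zero_comp]

lemma hom_eq_zero_of_mem_starSet {M N : Set C} (hM : ∀ m ∈ M, ∀ f : t ⟶ m, f = 0)
    (hN : ∀ n ∈ N, ∀ f : t ⟶ n, f = 0) :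
    ∀ x ∈ starSet M N, ∀ f : t ⟶ x, f = 0 := by
  rintro x ⟨m, hm, n, hn, a, b, c, hT⟩ f
  obtain ⟨g, hg⟩ := Triangle.coyoneda_exact₂ _ hT f (hN n hn _)
  exact hg.trans (by rw [hM m hm g]; exact zero_comp)

lemma hom_eq_zero_of_mem_layers {w : ℤ} {S : Set C}
    (hX : ∀ x ∈ shiftSet w S, ∀ f : t ⟶ x, f = 0) :
    ∀ n, ∀ x ∈ layers w S n, ∀ f : t ⟶ x, f = 0
  | 0 => hX
  | n + 1 => hom_eq_zero_of_mem_summandClosure t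
      (hom_eq_zero_of_mem_starSet t hX (hom_eq_zero_of_mem_layers hX n))

end HomVanishing

theorem stmt_16_general (w : ℤ) (S : Set C)
    (hgen : ∀ t : C, ∃ n : ℕ, t ∈ summandClosure (layers w S n)) :
    ∀ t : C, ¬ IsZero t →
      ∃ s ∈ S, ∃ k : ℤ, w + 1 ≤ k ∧ k ≤ 0 ∧ ∃ f : t ⟶ s⟦k⟧, f ≠ 0 := by
  intro t ht
  by_contra! h
  have hX : ∀ x ∈ shiftSet w S, ∀ f : t ⟶ x, f = 0 := by
    rintro x ⟨s, hs, k, hk₁, hk₂, rfl⟩ f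
    exact h s hs k hk₁ hk₂ f
  obtain ⟨n, htn⟩ := hgen t
  have hid : 𝟙 t = 0 :=
    hom_eq_zero_of_mem_summandClosure t (hom_eq_zero_of_mem_layers t hX n) t htn (𝟙 t)
  exact ht ((IsZero.iff_id_eq_zero t).2 hid)

/-- if every object of a pretriangulated category `C` is a direct summand of
an object of some `(X)_n`, where `X = { s⟦i⟧ : s ∈ S, w + 1 ≤ i ≤ 0 }`, then for every
nonzero object `t` there are `s ∈ S` and `w + 1 ≤ k ≤ 0` with `Hom(t, s⟦k⟧) ≠ 0`. -/
theorem stmt_16 (w : ℤ) (hw : w ≤ -1) (S : Set C)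
    (hgen : ∀ t : C, ∃ n : ℕ, t ∈ summandClosure (layers w S n)) :
    ∀ t : C, ¬ IsZero t →
      ∃ s ∈ S, ∃ k : ℤ, w + 1 ≤ k ∧ k ≤ 0 ∧ ∃ f : t ⟶ s⟦k⟧, f ≠ 0 :=
  stmt_16_general w S hgen
end
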